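/- arXiv:1711.04484 — 5 statements merged into one kernel-verified Lean document; each statement's English description precedes it below -/
import Mathlib

section
/- Let the applicants be partitioned into two types A^1 (of size n_1) and A^2 (of size n_2), suppose every applicant-company pair is mutually acceptable, and let L^1, L^2 be exact overall type quotas satisfying L^1 ≤ n_1, L^2 ≤ n_2 and L^1 + L^2 = U, where U is the sum of the upper quotas u_j over all companies. Then there exists an integer e and a matching M that is weakly stable for the instance obtained by adding e to the score s_{ij} of every type-1 applicant a_i at every company c_j (leaving type-2 scores unchanged), such that exactly L^1 type-1 applicants and exactly L^2 type-2 applicants are matched in M. -/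
/-!
Break the ties of the adjusted scores by strict priorities. For strict priorities a stable
matching exists (insert the applicants one at a time, each by a proposal chain); it fills all
seats, since there are at most as many seats as applicants; and it is weakly stable for every
score it refines.

Now raise the bonus of the type-1 applicants by half-steps, one applicant at a time. When the
priorities of a single applicant `y` change, a stable matching is carried to a stable matching
for the new priorities whose matched set differs by at most one applicant in each direction:
unassign `y`, let the vacancy chain refill her seat, and reinsert her. For a very negative bonus
at most `L1` type-1 applicants are matched, for a very large one at least `L1`, so by this
discrete intermediate value argument some stage matches exactly `L1` of them, and then exactly
`L2` type-2 applicants fill the remaining seats.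
-/

open Finset

variable {A C : Type*} [Fintype A] [DecidableEq A] [Fintype C] [DecidableEq C]

/-- `M` is a matching w.r.t. the acceptable pairs `E` and the upper quotas `u`. -/
def IsMatching (E : Finset (A × C)) (u : C → ℕ) (M : Finset (A × C)) : Prop :=
  M ⊆ E ∧ (∀ a : A, (M.filter (fun p => p.1 = a)).card ≤ 1) ∧
    ∀ c : C, (M.filter (fun p => p.2 = c)).card ≤ u c

/-- `(a, c) ∈ E \ M` weakly blocks `M` (w.r.t. scores `s`). -/
def WeaklyBlocks (E : Finset (A × C)) (u : C → ℕ) (pref : A → C → ℕ) (s : A → C → ℤ)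
    (M : Finset (A × C)) (a : A) (c : C) : Prop :=
  (a, c) ∈ E ∧ (a, c) ∉ M ∧ (∀ c', (a, c') ∈ M → pref a c < pref a c') ∧
    ((M.filter (fun p => p.2 = c)).card < u c ∨ ∃ h : A, (h, c) ∈ M ∧ s h c < s a c)

/-- `M` is weakly stable: no pair weakly blocks it. -/
def WeaklyStable (E : Finset (A × C)) (u : C → ℕ) (pref : A → C → ℕ) (s : A → C → ℤ)
    (M : Finset (A × C)) : Prop :=
  ∀ (a : A) (c : C), ¬ WeaklyBlocks E u pref s M a c

set_option linter.unusedSectionVars false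

open Function

namespace Assignment

def load (g : A → Option C) (c : C) : ℕ := #(univ.filter fun a => g a = some c)

def matched (g : A → Option C) : Finset A := univ.filter fun a => g a ≠ none

def Prefers (pref : A → C → ℕ) (a : A) (c : C) (o : Option C) : Prop :=
  ∀ c' ∈ o, pref a c < pref a c'

def Rejects (u : C → ℕ) (κ : A → C → ℤ) (g : A → Option C) (a : A) (c : C) : Prop :=
  u c ≤ load g c ∧ ∀ h, g h = some c → κ a c < κ h c

instance (u : C → ℕ) (κ : A → C → ℤ) (g : A → Option C) (a : A) (c : C) :
    Decidable (Rejects u κ g a c) :=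
  inferInstanceAs (Decidable (_ ∧ _))

/-- Stability for the priorities `κ` when only the applicants in `S` take part. -/
structure IsStable (S : Finset A) (u : C → ℕ) (pref : A → C → ℕ) (κ : A → C → ℤ)
    (g : A → Option C) : Prop where
  eq_none_of_notMem : ∀ a ∉ S, g a = none
  load_le : ∀ c, load g c ≤ u c
  rejects : ∀ a ∈ S, ∀ c, Prefers pref a c (g a) → Rejects u κ g a c

def removeSeat (u : C → ℕ) (o : Option C) (c : C) : ℕ := if o = some c then u c - 1 else u c

variable {u : C → ℕ} {pref : A → C → ℕ} {κ κ' : A → C → ℤ} {g : A → Option C} {S : Finset A}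

lemma card_filter_le_card_filter_add_card_sdiff (p : A → Prop) [DecidablePred p] (X Y : Finset A) :
    #(X.filter p) ≤ #(Y.filter p) + #(X \ Y) := by
  refine (card_le_card fun x hx => ?_).trans (card_union_le _ _)
  by_cases hx' : x ∈ Y <;> simp_all

@[simp] lemma mem_matched {a : A} : a ∈ matched g ↔ g a ≠ none := by simp [matched]

lemma load_update_add (g : A → Option C) (b : A) (o : Option C) (c : C) :
    load (update g b o) c + (if g b = some c then 1 else 0)
      = load g c + (if o = some c then 1 else 0) := by
  have hrest : ∑ a ∈ univ.erase b, (if update g b o a = some c then 1 else 0)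
      = ∑ a ∈ univ.erase b, (if g a = some c then 1 else 0) :=
    sum_congr rfl fun a ha => by rw [update_of_ne (ne_of_mem_erase ha)]
  simp only [load, card_filter, ← add_sum_erase _ _ (mem_univ b), hrest, update_self]
  ring

lemma load_pos {a : A} {c : C} (h : g a = some c) : 0 < load g c :=
  card_pos.2 ⟨a, by simpa using h⟩

lemma sum_load (g : A → Option C) : ∑ c, load g c = #(matched g) := by
  simp only [load, matched, card_filter]
  rw [sum_comm]
  refine sum_congr rfl fun a _ => ?_
  cases g a <;> simp

lemma matched_update_some (g : A → Option C) (b : A) (c : C) :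
    matched (update g b (some c)) = insert b (matched g) := by
  ext a; by_cases h : a = b <;> simp [h]

lemma matched_update_none (g : A → Option C) (b : A) :
    matched (update g b none) = (matched g).erase b := by
  ext a; by_cases h : a = b <;> simp [h]

@[simp] lemma removeSeat_none (u : C → ℕ) : removeSeat u none = u := by
  ext c; simp [removeSeat]

lemma removeSeat_le (u : C → ℕ) (o : Option C) (c : C) : removeSeat u o c ≤ u c := by
  unfold removeSeat; split_ifs <;> omega

lemma Prefers.trans {a : A} {c v : C} {o : Option C} (h : Prefers pref a c (some v))
    (hv : Prefers pref a v o) : Prefers pref a c o :=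
  fun c' hc' => (h v rfl).trans (hv c' hc')

lemma IsStable.mem_of_ne_none {a : A} (hg : IsStable S u pref κ g) (ha : g a ≠ none) : a ∈ S :=
  by_contra fun h => ha (hg.eq_none_of_notMem a h)

lemma IsStable.congr_priority (hg : IsStable S u pref κ g) (h : ∀ a ∈ S, κ' a = κ a) :
    IsStable S u pref κ' g := by
  refine ⟨hg.eq_none_of_notMem, hg.load_le, fun a ha c hpref => ?_⟩
  obtain ⟨hfull, hbelow⟩ := hg.rejects a ha c hpref
  refine ⟨hfull, fun x hx => ?_⟩
  rw [h a ha, h x (hg.mem_of_ne_none (by simp [hx]))]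
  exact hbelow x hx

lemma Rejects.update_of_load_lt {a y : A} {c c₀ : C} (h : Rejects u κ g a c) (hgy : g y = none)
    (hc₀ : load g c₀ < u c₀) : Rejects u κ (update g y (some c₀)) a c := by
  have hc : c₀ ≠ c := by rintro rfl; exact h.1.not_gt hc₀
  have hload := load_update_add g y (some c₀) c
  simp only [hgy, reduceCtorEq, if_false, Option.some.injEq, hc, add_zero] at hload
  refine ⟨hload ▸ h.1, fun x hx => h.2 x ?_⟩
  rcases eq_or_ne x y with rfl | hxy
  · simp [hc] at hx
  · rwa [update_of_ne hxy] at hx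

lemma IsStable.insert_update_of_load_lt {y : A} {c₀ : C} (hg : IsStable S u pref κ g)
    (hgy : g y = none) (hbetter : ∀ c, Prefers pref y c (some c₀) → Rejects u κ g y c)
    (hc₀ : load g c₀ < u c₀) : IsStable (insert y S) u pref κ (update g y (some c₀)) := by
  refine ⟨fun a ha => ?_, fun c => ?_, fun a ha c hpref => ?_⟩
  · rw [update_of_ne (by rintro rfl; exact ha (mem_insert_self _ _))]
    exact hg.eq_none_of_notMem a fun h => ha (mem_insert_of_mem h)
  · have hload := load_update_add g y (some c₀) c
    have := hg.load_le c
    simp only [hgy, reduceCtorEq, if_false, add_zero, Option.some.injEq] at hload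
    split_ifs at hload with hc <;> [subst hc; skip] <;> omega
  · refine Rejects.update_of_load_lt ?_ hgy hc₀
    rcases eq_or_ne a y with rfl | hay
    · exact hbetter c (by simpa using hpref)
    · rw [update_of_ne hay] at hpref
      exact hg.rejects a ((mem_insert.1 ha).resolve_left hay) c hpref

section Displace

/-! The unassigned applicant `y` takes the seat of `m`, the weakest assignee of `c₀`. -/

variable {y m : A} {c₀ : C} (hgy : g y = none) (hgm : g m = some c₀)
include hgy hgm

lemma load_displace : load (update (update g m none) y (some c₀)) = load g := by
  have hym : y ≠ m := by rintro rfl; simp [hgy] at hgm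
  ext c
  have h₁ := load_update_add g m none c
  have h₂ := load_update_add (update g m none) y (some c₀) c
  rw [update_of_ne hym, hgy] at h₂
  rw [hgm] at h₁
  simp only [reduceCtorEq, if_false, add_zero, Option.some.injEq] at h₁ h₂
  split_ifs at h₁ h₂ <;> omega

lemma eq_some_of_displace {h : A} {c : C} (hh : update (update g m none) y (some c₀) h = some c) :
    (h = y ∧ c = c₀) ∨ (h ≠ m ∧ g h = some c) := by
  rcases eq_or_ne h y with rfl | hhy
  · simp_all
  rw [update_of_ne hhy] at hh
  rcases eq_or_ne h m with rfl | hhm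
  · simp at hh
  · rw [update_of_ne hhm] at hh
    exact Or.inr ⟨hhm, hh⟩

variable (hmin : ∀ h, g h = some c₀ → κ m c₀ ≤ κ h c₀) (hmy : κ m c₀ < κ y c₀)
include hmin hmy

lemma Rejects.displace {a : A} {c : C} (h : Rejects u κ g a c) :
    Rejects u κ (update (update g m none) y (some c₀)) a c := by
  refine ⟨(load_displace hgy hgm).symm ▸ h.1, fun x hx => ?_⟩
  rcases eq_some_of_displace hgy hgm hx with ⟨rfl, rfl⟩ | ⟨-, hx⟩
  · exact (h.2 m hgm).trans hmy
  · exact h.2 x hx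

lemma rejects_displace (hκ : Injective (κ · c₀)) (hfull : u c₀ ≤ load g c₀) :
    Rejects u κ (update (update g m none) y (some c₀)) m c₀ := by
  refine ⟨(load_displace hgy hgm).symm ▸ hfull, fun x hx => ?_⟩
  rcases eq_some_of_displace hgy hgm hx with ⟨rfl, -⟩ | ⟨hxm, hx⟩
  · exact hmy
  · exact (hmin x hx).lt_of_ne fun h => hxm (hκ h).symm

lemma card_filter_not_rejects_displace_lt (hκ : Injective (κ · c₀)) (hfull : u c₀ ≤ load g c₀) :
    #(univ.filter fun p : A × C => ¬ Rejects u κ (update (update g m none) y (some c₀)) p.1 p.2)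
      < #(univ.filter fun p : A × C => ¬ Rejects u κ g p.1 p.2) := by
  refine card_lt_card ⟨monotone_filter_right _ fun p _ h h' => h (h'.displace hgy hgm hmin hmy),
    fun hsub => ?_⟩
  have hm : (m, c₀) ∈ univ.filter fun p : A × C => ¬ Rejects u κ g p.1 p.2 := by
    simpa using fun h => (h.2 m hgm).false
  exact (mem_filter.1 (hsub hm)).2 (rejects_displace hgy hgm hmin hmy hκ hfull)

lemma IsStable.displace (hg : IsStable S u pref κ g)
    (hbetter : ∀ c, Prefers pref y c (some c₀) → Rejects u κ g y c) :
    IsStable ((insert y S).erase m) u pref κ (update (update g m none) y (some c₀)) := by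
  have hym : y ≠ m := by rintro rfl; simp [hgy] at hgm
  refine ⟨fun a ha => ?_, fun c => load_displace hgy hgm ▸ hg.load_le c, fun a ha c hpref => ?_⟩
  · rcases eq_or_ne a m with rfl | ham
    · simp [hym.symm]
    · have hay : a ≠ y := fun h => ha (mem_erase.2 ⟨ham, h ▸ mem_insert_self _ _⟩)
      rw [update_of_ne hay, update_of_ne ham]
      exact hg.eq_none_of_notMem a fun h => ha (mem_erase.2 ⟨ham, mem_insert_of_mem h⟩)
  · obtain ⟨ham, ha⟩ := mem_erase.1 ha
    refine Rejects.displace hgy hgm hmin hmy ?_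
    rcases eq_or_ne a y with rfl | hay
    · exact hbetter c (by simpa using hpref)
    · refine hg.rejects a ((mem_insert.1 ha).resolve_left hay) c ?_
      simpa [update_of_ne hay, update_of_ne ham] using hpref

end Displace

/-- The proposal chain started by a new applicant `y`. It terminates because each displacement
adds the rejection of the displaced applicant by her company and no rejection is ever lost. -/
theorem IsStable.exists_insert (hκ : ∀ c, Injective (κ · c)) {S : Finset A} {g : A → Option C}
    (hg : IsStable S u pref κ g) {y : A} (hy : y ∉ S) :
    ∃ g', IsStable (insert y S) u pref κ g' ∧ matched g' ⊆ insert y (matched g) ∧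
      #(insert y (matched g) \ matched g') ≤ 1 := by
  have hgy := hg.eq_none_of_notMem y hy
  by_cases hrej : ∀ c, Rejects u κ g y c
  · refine ⟨g, ⟨fun a ha => hg.eq_none_of_notMem a fun h => ha (mem_insert_of_mem h), hg.load_le,
      ?_⟩, subset_insert _ _, by simp [insert_sdiff_of_notMem _ (show y ∉ matched g by simpa)]⟩
    rintro a ha c hpref
    rcases mem_insert.1 ha with rfl | ha
    exacts [hrej c, hg.rejects a ha c hpref]
  push Not at hrej
  obtain ⟨c₀, hc₀, hbest⟩ := exists_min_image (univ.filter fun c => ¬ Rejects u κ g y c) (pref y)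
    (by simpa [Finset.Nonempty] using hrej)
  replace hc₀ : ¬ Rejects u κ g y c₀ := by simpa using hc₀
  have hbetter : ∀ c, Prefers pref y c (some c₀) → Rejects u κ g y c := fun c hc =>
    by_contra fun h => (hbest c (by simpa using h)).not_gt (hc c₀ rfl)
  by_cases hfull : u c₀ ≤ load g c₀
  · obtain ⟨h₀, hh₀, hh₀y⟩ : ∃ h, g h = some c₀ ∧ κ h c₀ ≤ κ y c₀ := by
      simpa [Rejects, hfull] using hc₀
    obtain ⟨m, hm, hmin⟩ := exists_min_image (univ.filter fun h => g h = some c₀) (κ · c₀)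
      ⟨h₀, by simpa using hh₀⟩
    replace hm : g m = some c₀ := by simpa using hm
    replace hmin : ∀ h, g h = some c₀ → κ m c₀ ≤ κ h c₀ := fun h hh => hmin h (by simpa using hh)
    have hmy : κ m c₀ < κ y c₀ :=
      ((hmin h₀ hh₀).trans hh₀y).lt_of_ne fun h => by simp [hκ c₀ h, hgy] at hm
    obtain ⟨g', hg', hsub, hcard⟩ :=
      IsStable.exists_insert hκ (hg.displace hgy hm hmin hmy hbetter) (notMem_erase m _)
    have hM : insert m (matched (update (update g m none) y (some c₀))) = insert y (matched g) := by
      rw [matched_update_some, matched_update_none, insert_comm, insert_erase (by simp [hm])]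
    rw [insert_erase (mem_insert_of_mem (hg.mem_of_ne_none (by simp [hm])))] at hg'
    exact ⟨g', hg', hM ▸ hsub, hM ▸ hcard⟩
  · exact ⟨_, hg.insert_update_of_load_lt hgy hbetter (not_le.1 hfull),
      by rw [matched_update_some], by simp [matched_update_some]⟩
termination_by #(univ.filter fun p : A × C => ¬ Rejects u κ g p.1 p.2)
decreasing_by exact card_filter_not_rejects_displace_lt hgy hm hmin hmy (hκ c₀) hfull

theorem exists_isStable (hκ : ∀ c, Injective (κ · c)) (S : Finset A) :
    ∃ g, IsStable S u pref κ g := by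
  induction S using Finset.induction_on with
  | empty => exact ⟨fun _ => none, fun _ _ => rfl, fun c => by simp [load], by simp⟩
  | insert y S hy ih =>
    obtain ⟨g, hg⟩ := ih
    obtain ⟨g', hg', -⟩ := hg.exists_insert hκ hy
    exact ⟨g', hg'⟩

lemma IsStable.erase (hg : IsStable S u pref κ g) (y : A) :
    IsStable (S.erase y) (removeSeat u (g y)) pref κ (update g y none) := by
  have hload (c : C) := load_update_add g y none c
  simp only [reduceCtorEq, if_false, add_zero] at hload
  refine ⟨fun a ha => ?_, fun c => ?_, fun a ha c hpref => ?_⟩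
  · rcases eq_or_ne a y with rfl | hay
    · exact update_self ..
    · rw [update_of_ne hay]
      exact hg.eq_none_of_notMem a fun h => ha (mem_erase.2 ⟨hay, h⟩)
  · have := hg.load_le c
    have := hload c
    unfold removeSeat
    split_ifs at * <;> omega
  · obtain ⟨hay, ha⟩ := mem_erase.1 ha
    rw [update_of_ne hay] at hpref
    obtain ⟨hfull, hbelow⟩ := hg.rejects a ha c hpref
    refine ⟨?_, fun x hx => hbelow x ?_⟩
    · have := hload c
      unfold removeSeat
      split_ifs at * <;> omega
    · rcases eq_or_ne x y with rfl | hxy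
      · simp at hx
      · rwa [update_of_ne hxy] at hx

lemma Rejects.update_some_of_ne {a b : A} {c v : C} (h : Rejects (removeSeat u (some v)) κ g a c)
    (hcv : c ≠ v) : Rejects (removeSeat u (g b)) κ (update g b (some v)) a c := by
  obtain ⟨hfull, hbelow⟩ := h
  refine ⟨?_, fun x hx => hbelow x ?_⟩
  · have := load_update_add g b (some v) c
    simp only [removeSeat, Option.some.injEq, Ne.symm hcv, if_false, add_zero] at *
    split_ifs at * <;> omega
  · rcases eq_or_ne x b with rfl | hxb
    · simp [Ne.symm hcv] at hx
    · rwa [update_of_ne hxb] at hx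

lemma IsStable.update_of_removeSeat {v : C} (hκ : Injective (κ · v))
    (hg : IsStable S (removeSeat u (some v)) pref κ g) (hv : 0 < u v) {b : A} (hbS : b ∈ S)
    (hb : Prefers pref b v (g b)) (hbest : ∀ a ∈ S, Prefers pref a v (g a) → κ a v ≤ κ b v) :
    IsStable S (removeSeat u (g b)) pref κ (update g b (some v)) := by
  have hgb : g b ≠ some v := fun h => (hb v h).false
  have hfull : load g v + 1 = u v := by
    have h₁ := (hg.rejects b hbS v hb).1
    have h₂ := hg.load_le v
    simp only [removeSeat, if_true] at h₁ h₂
    omega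
  have hload (c : C) := load_update_add g b (some v) c
  refine ⟨fun a ha => ?_, fun c => ?_, fun a ha c hpref => ?_⟩
  · rw [update_of_ne (by rintro rfl; exact ha hbS)]
    exact hg.eq_none_of_notMem a ha
  · have h₁ := hg.load_le c
    have h₂ := hload c
    rcases eq_or_ne c v with rfl | hcv
    · simp only [removeSeat, hgb, if_true, if_false] at h₁ h₂ ⊢
      omega
    · simp only [removeSeat, Option.some.injEq, Ne.symm hcv, if_false, add_zero] at h₁ h₂ ⊢
      split_ifs at h₂ ⊢ <;> omega
  rcases eq_or_ne c v with rfl | hcv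
  · have hab : a ≠ b := by rintro rfl; exact (hpref c (update_self ..)).false
    rw [update_of_ne hab] at hpref
    refine ⟨?_, fun x hx => ?_⟩
    · have := hload c
      simp only [removeSeat, hgb, if_false, if_true] at *
      omega
    · rcases eq_or_ne x b with rfl | hxb
      · exact (hbest a ha hpref).lt_of_ne fun h => hab (hκ h)
      · rw [update_of_ne hxb] at hx
        exact (hg.rejects a ha c hpref).2 x hx
  · refine (hg.rejects a ha c ?_).update_some_of_ne hcv
    rcases eq_or_ne a b with rfl | hab
    · exact Prefers.trans (by simpa using hpref) hb
    · rwa [update_of_ne hab] at hpref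

/-- The vacancy chain refilling one seat at `v`. It terminates because the applicant who moves
strictly improves. -/
theorem IsStable.exists_of_removeSeat (hκ : ∀ c, Injective (κ · c)) {g : A → Option C} {v : C}
    (hg : IsStable S (removeSeat u (some v)) pref κ g) (hv : 0 < u v) :
    ∃ g', IsStable S u pref κ g' ∧ matched g ⊆ matched g' ∧ #(matched g' \ matched g) ≤ 1 := by
  classical
  by_cases hW : ∃ a ∈ S, Prefers pref a v (g a)
  · obtain ⟨b, hb, hbest⟩ := exists_max_image (S.filter fun a => Prefers pref a v (g a)) (κ · v)
      (by simpa [Finset.Nonempty] using hW)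
    obtain ⟨hbS, hbv⟩ := mem_filter.1 hb
    have hg₁ := hg.update_of_removeSeat (hκ v) hv hbS hbv fun a ha h => hbest a (by simp [ha, h])
    cases hgb : g b with
    | none =>
      rw [hgb, removeSeat_none] at hg₁
      refine ⟨_, hg₁, by simp [matched_update_some, subset_insert], ?_⟩
      rw [matched_update_some]
      simp [insert_sdiff_of_notMem _ (show b ∉ matched g by simpa using hgb)]
    | some c =>
      rw [hgb] at hg₁
      have hM : matched (update g b (some v)) = matched g := by
        rw [matched_update_some, insert_eq_of_mem (by simp [hgb])]
      have hc : 0 < u c :=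
        (load_pos hgb).trans_le ((hg.load_le c).trans (removeSeat_le u _ c))
      obtain ⟨g', hg', hsub, hcard⟩ := IsStable.exists_of_removeSeat hκ hg₁ hc
      exact ⟨g', hg', hM ▸ hsub, hM ▸ hcard⟩
  · push Not at hW
    refine ⟨g, ⟨hg.eq_none_of_notMem, fun c => (hg.load_le c).trans (removeSeat_le u _ c),
      fun a ha c hpref => ?_⟩, subset_refl _, by simp⟩
    have hcv : c ≠ v := by rintro rfl; exact hW a ha hpref
    simpa [Rejects, removeSeat, Ne.symm hcv] using hg.rejects a ha c hpref
termination_by ∑ a, (g a).elim 0 (pref a)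
decreasing_by
  refine sum_lt_sum (fun a _ => ?_) ⟨b, mem_univ b, by simpa [hgb] using hbv c hgb⟩
  rcases eq_or_ne a b with rfl | hab
  · simp [hgb, (hbv c hgb).le]
  · rw [update_of_ne hab]

theorem IsStable.exists_of_priority_eq_of_ne (hκ' : ∀ c, Injective (κ' · c)) {y : A}
    (hagree : ∀ a ≠ y, κ' a = κ a) (hg : IsStable univ u pref κ g) :
    ∃ g', IsStable univ u pref κ' g' ∧ #(matched g' \ matched g) ≤ 1 ∧
      #(matched g \ matched g') ≤ 1 := by
  have h₀ := (hg.erase y).congr_priority fun a ha => hagree a (ne_of_mem_erase ha)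
  cases hgy : g y with
  | none =>
    rw [hgy, removeSeat_none, update_eq_self_iff.2 hgy.symm] at h₀
    obtain ⟨g', hg', hsub, hcard⟩ := h₀.exists_insert hκ' (notMem_erase y univ)
    rw [insert_erase (mem_univ y)] at hg'
    refine ⟨g', hg', (card_le_card fun x hx => ?_).trans (card_singleton y).le,
      (card_le_card (sdiff_subset_sdiff (subset_insert _ _) subset_rfl)).trans hcard⟩
    obtain ⟨hx', hxg⟩ := mem_sdiff.1 hx
    exact mem_singleton.2 ((mem_insert.1 (hsub hx')).resolve_right hxg)
  | some c =>
    rw [hgy] at h₀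
    obtain ⟨g₁, hg₁, hsub₁, hcard₁⟩ := h₀.exists_of_removeSeat hκ'
      ((load_pos hgy).trans_le (hg.load_le c))
    obtain ⟨g', hg', hsub, hcard⟩ := hg₁.exists_insert hκ' (notMem_erase y univ)
    rw [insert_erase (mem_univ y)] at hg'
    have hy : y ∈ matched g := by simp [hgy]
    rw [matched_update_none] at hsub₁ hcard₁
    refine ⟨g', hg', (card_le_card fun x hx => ?_).trans hcard₁,
      (card_le_card (sdiff_subset_sdiff (fun x hx => ?_) subset_rfl)).trans hcard⟩
    · obtain ⟨hx', hxg⟩ := mem_sdiff.1 hx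
      have hxy : x ≠ y := by rintro rfl; exact hxg hy
      exact mem_sdiff.2 ⟨(mem_insert.1 (hsub hx')).resolve_left hxy,
        fun h => hxg (mem_of_mem_erase h)⟩
    · rcases eq_or_ne x y with rfl | hxy
      · exact mem_insert_self _ _
      · exact mem_insert_of_mem (hsub₁ (mem_erase.2 ⟨hxy, hx⟩))

theorem IsStable.card_matched (hg : IsStable univ u pref κ g)
    (hU : ∑ c, u c ≤ Fintype.card A) : #(matched g) = ∑ c, u c := by
  rw [← sum_load]
  refine sum_congr rfl fun c _ => (hg.load_le c).antisymm (not_lt.1 fun hc => ?_)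
  have hall : matched g = univ := eq_univ_of_forall fun a => mem_matched.2 fun ha =>
    (hg.rejects a (mem_univ a) c (by simp [Prefers, ha])).1.not_gt hc
  have := sum_lt_sum (fun c _ => hg.load_le c) ⟨c, mem_univ c, hc⟩
  rw [sum_load, hall, card_univ] at this
  omega

theorem IsStable.subset_matched_or_matched_subset {t : Finset A} (hg : IsStable univ u pref κ g)
    (ht : ∀ a ∈ t, ∀ b ∉ t, ∀ c, κ b c < κ a c) : t ⊆ matched g ∨ matched g ⊆ t := by
  by_contra! h
  obtain ⟨⟨a, hat, ha⟩, ⟨b, hb, hbt⟩⟩ := And.imp not_subset.1 not_subset.1 h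
  obtain ⟨c, hc⟩ := Option.ne_none_iff_exists'.1 (mem_matched.1 hb)
  have := (hg.rejects a (mem_univ a) c (by simp_all [Prefers])).2 b hc
  exact (ht a hat b hbt c).not_gt this

theorem IsStable.min_le_card_filter_mem {t : Finset A} (hg : IsStable univ u pref κ g)
    (hU : ∑ c, u c ≤ Fintype.card A) (ht : ∀ a ∈ t, ∀ b ∉ t, ∀ c, κ b c < κ a c) :
    min #t (∑ c, u c) ≤ #((matched g).filter (· ∈ t)) := by
  rcases hg.subset_matched_or_matched_subset ht with h | h
  · rw [filter_mem_eq_inter, inter_eq_right.2 h]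
    exact min_le_left _ _
  · rw [filter_true_of_mem h, hg.card_matched hU]
    exact min_le_right _ _

theorem IsStable.card_filter_add_card_filter_not {t : Finset A} (hg : IsStable univ u pref κ g)
    (hU : ∑ c, u c ≤ Fintype.card A) :
    #((matched g).filter (· ∈ t)) + #((matched g).filter (· ∉ t)) = ∑ c, u c := by
  rw [Finset.card_filter_add_card_filter_not, hg.card_matched hU]

def graph (g : A → Option C) : Finset (A × C) := univ.filter fun p => g p.1 = some p.2

@[simp] lemma mem_graph {p : A × C} : p ∈ graph g ↔ g p.1 = some p.2 := by simp [graph]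

lemma card_graph_filter_fst (p : A → Prop) [DecidablePred p] :
    #((graph g).filter fun q => p q.1) = #((matched g).filter p) := by
  refine card_bij (fun q _ => q.1) (fun q hq => ?_) (fun q hq q' hq' h => ?_) fun a ha => ?_
  · simp_all
  · simp only [mem_filter, mem_graph] at hq hq'
    rw [h, hq'.1, Option.some_inj] at hq
    exact Prod.ext h hq.1.symm
  · obtain ⟨ha, hpa⟩ := mem_filter.1 ha
    obtain ⟨c, hc⟩ := Option.ne_none_iff_exists'.1 (mem_matched.1 ha)
    exact ⟨(a, c), by simp [hc, hpa], rfl⟩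

lemma card_graph_filter_snd (c : C) : #((graph g).filter fun q => q.2 = c) = load g c := by
  refine card_bij (fun q _ => q.1) (fun q hq => ?_) (fun q hq q' hq' h => ?_) fun a ha => ?_
  · simp only [mem_filter, mem_graph] at hq
    simp [hq.1, hq.2]
  · simp only [mem_filter, mem_graph] at hq hq'
    exact Prod.ext h (hq.2.trans hq'.2.symm)
  · exact ⟨(a, c), by simpa [load] using ha, rfl⟩

lemma isMatching_graph (h : ∀ c, load g c ≤ u c) : IsMatching univ u (graph g) := by
  refine ⟨subset_univ _, fun a => ?_, fun c => (card_graph_filter_snd c).trans_le (h c)⟩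
  rw [card_graph_filter_fst (· = a), filter_eq']
  split_ifs <;> simp

def Refines (κ s : A → C → ℤ) : Prop := ∀ a b c, s a c < s b c → κ a c < κ b c

theorem IsStable.weaklyStable_graph {s : A → C → ℤ} (hg : IsStable univ u pref κ g)
    (hκ : Refines κ s) : WeaklyStable univ u pref s (graph g) := by
  rintro a c ⟨-, -, hpref, hblock⟩
  obtain ⟨hfull, hbelow⟩ :=
    hg.rejects a (mem_univ a) c fun c' hc' => hpref c' (mem_graph.2 hc')
  rcases hblock with hlt | ⟨h, hh, hs⟩
  · rw [card_graph_filter_snd] at hlt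
    exact hfull.not_gt hlt
  · exact (hbelow h (mem_graph.1 hh)).not_gt (hκ h a c hs)

theorem IsStable.card_filter_eq_or_exists {t : Finset A} (hκ' : ∀ c, Injective (κ' · c)) {y : A}
    (hagree : ∀ a ≠ y, κ' a = κ a) (hg : IsStable univ u pref κ g) {L : ℕ}
    (hL : #((matched g).filter (· ∈ t)) ≤ L) :
    #((matched g).filter (· ∈ t)) = L ∨
      ∃ g', IsStable univ u pref κ' g' ∧ #((matched g').filter (· ∈ t)) ≤ L := by
  obtain ⟨g', hg', hcard, -⟩ := hg.exists_of_priority_eq_of_ne hκ' hagree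
  by_cases h : #((matched g').filter (· ∈ t)) ≤ L
  · exact .inr ⟨g', hg', h⟩
  · have := card_filter_le_card_filter_add_card_sdiff (· ∈ t) (matched g') (matched g)
    omega

noncomputable def tieBreak (f : A → C → ℤ) : A → C → ℤ :=
  fun a c => f a c * Fintype.card A + Fintype.equivFin A a

lemma tieBreak_lt_tieBreak {f : A → C → ℤ} {a b : A} {c : C} (h : f a c < f b c) :
    tieBreak f a c < tieBreak f b c := by
  have ha : ((Fintype.equivFin A a : ℕ) : ℤ) < Fintype.card A := by
    exact_mod_cast (Fintype.equivFin A a).isLt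
  have hmul : (f a c + 1) * Fintype.card A ≤ f b c * Fintype.card A :=
    mul_le_mul_of_nonneg_right (by omega) (by positivity)
  simp only [tieBreak]
  linarith [(Nat.cast_nonneg (Fintype.equivFin A b : ℕ) : (0 : ℤ) ≤ _)]

lemma tieBreak_injective (f : A → C → ℤ) (c : C) : Injective (tieBreak f · c) := by
  intro a b h
  rcases lt_trichotomy (f a c) (f b c) with hab | hab | hab
  · exact absurd h (tieBreak_lt_tieBreak hab).ne
  · simpa [tieBreak, hab, Fin.val_inj] using h
  · exact absurd h (tieBreak_lt_tieBreak hab).ne'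

section Walk

variable (s : A → C → ℤ) (t : Finset A)

/-- Scores are doubled so that moving the type-`t` applicants one at a time from bonus `m` to
`m + 1` keeps refining an integer bonus (`exists_refines_stagePriority`). -/
noncomputable def stagePriority (m : ℤ) (K : Finset A) : A → C → ℤ :=
  tieBreak fun a c => 2 * s a c + if a ∈ t then m + if a ∈ K then 1 else 0 else 0

lemma exists_refines_stagePriority (m : ℤ) (K : Finset A) :
    ∃ e, Refines (stagePriority s t m K) fun a c => s a c + if a ∈ t then e else 0 := by
  obtain ⟨e, rfl | rfl⟩ := Int.even_or_odd' m
  · refine ⟨e, fun a b c h => tieBreak_lt_tieBreak ?_⟩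
    dsimp only at h ⊢
    split_ifs at h ⊢ <;> omega
  · refine ⟨e + 1, fun a b c h => tieBreak_lt_tieBreak ?_⟩
    dsimp only at h ⊢
    split_ifs at h ⊢ <;> omega

lemma stagePriority_insert_of_ne (m : ℤ) (K : Finset A) {y a : A} (ha : a ≠ y) :
    stagePriority s t m (insert y K) a = stagePriority s t m K a := by
  ext c
  simp [stagePriority, tieBreak, ha]

lemma stagePriority_self (m : ℤ) : stagePriority s t m t = stagePriority s t (m + 1) ∅ := by
  ext a c
  by_cases ha : a ∈ t <;> simp [stagePriority, tieBreak, ha]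

lemma exists_forall_lt_add : ∃ E : ℕ, ∀ a b c, s b c < s a c + E := by
  refine ⟨2 * ∑ p : A × C, (s p.1 p.2).natAbs + 1, fun a b c => ?_⟩
  have ha := single_le_sum (f := fun p : A × C => (s p.1 p.2).natAbs) (by simp) (mem_univ (a, c))
  have hb := single_le_sum (f := fun p : A × C => (s p.1 p.2).natAbs) (by simp) (mem_univ (b, c))
  simp only at ha hb
  omega

variable {s t}

lemma stagePriority_neg_lt {E : ℤ} (hE : ∀ a b c, s b c < s a c + E) {a b : A} (ha : a ∈ t)
    (hb : b ∉ t) (c : C) :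
    stagePriority s t (-(2 * E)) ∅ a c < stagePriority s t (-(2 * E)) ∅ b c :=
  tieBreak_lt_tieBreak (by simp [ha, hb]; linarith [hE b a c])

lemma stagePriority_lt {E : ℤ} (hE : ∀ a b c, s b c < s a c + E) {a b : A} (ha : a ∈ t)
    (hb : b ∉ t) (c : C) :
    stagePriority s t (2 * E) ∅ b c < stagePriority s t (2 * E) ∅ a c :=
  tieBreak_lt_tieBreak (by simp [ha, hb]; linarith [hE a b c])

variable (s t)

theorem exists_refines_isStable_card_filter_eq {L : ℕ} (hLt : L ≤ #t) (hLU : L ≤ ∑ c, u c)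
    (hUL : ∑ c, u c ≤ L + #tᶜ) :
    ∃ e κ g, Refines κ (fun a c => s a c + if a ∈ t then e else 0) ∧
      IsStable univ u pref κ g ∧ #((matched g).filter (· ∈ t)) = L := by
  have hU : ∑ c, u c ≤ Fintype.card A := hUL.trans (by rw [← card_add_card_compl t]; omega)
  obtain ⟨E, hE⟩ := exists_forall_lt_add s
  let P (m : ℤ) (K : Finset A) : Prop :=
    (∃ e κ g, Refines κ (fun a c => s a c + if a ∈ t then e else 0) ∧
      IsStable univ u pref κ g ∧ #((matched g).filter (· ∈ t)) = L) ∨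
    ∃ g, IsStable univ u pref (stagePriority s t m K) g ∧ #((matched g).filter (· ∈ t)) ≤ L
  have step (m : ℤ) (K : Finset A) : P m ∅ → P m K := by
    intro h₀
    induction K using Finset.induction_on with
    | empty => exact h₀
    | insert y K _ ih =>
      rcases ih with h | ⟨g, hg, hgL⟩
      · exact .inl h
      rcases hg.card_filter_eq_or_exists (tieBreak_injective _)
        (fun a ha => stagePriority_insert_of_ne s t m K ha) hgL with h | h
      · obtain ⟨e, he⟩ := exists_refines_stagePriority s t m K
        exact .inl ⟨e, _, g, he, hg, h⟩
      · exact .inr h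
  have walk (j : ℕ) : P (-(2 * E) + j) ∅ := by
    induction j with
    | zero =>
      obtain ⟨g, hg⟩ := exists_isStable (κ := stagePriority s t (-(2 * E)) ∅) (u := u)
        (pref := pref) (tieBreak_injective _) univ
      have hmin := hg.min_le_card_filter_mem (t := tᶜ) hU fun a ha b hb =>
        stagePriority_neg_lt hE (notMem_compl.1 hb) (mem_compl.1 ha)
      have hsplit := hg.card_filter_add_card_filter_not (t := t) hU
      simp only [mem_compl] at hmin
      exact .inr ⟨g, by simpa using hg, by omega⟩
    | succ j ih =>
      rw [Nat.cast_succ, ← add_assoc]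
      simpa only [P, stagePriority_self] using step _ t ih
  rcases walk (4 * E) with h | ⟨g, hg, hgL⟩
  · exact h
  have hm : -(2 * (E : ℤ)) + ((4 * E : ℕ) : ℤ) = 2 * E := by push_cast; ring
  rw [hm] at hg
  obtain ⟨e, he⟩ := exists_refines_stagePriority s t (2 * E) ∅
  refine ⟨e, _, g, he, hg, hgL.antisymm ?_⟩
  have := hg.min_le_card_filter_mem hU fun a ha b hb => stagePriority_lt hE ha hb
  omega

end Walk

end Assignment

open Assignment

theorem stable_matching_with_equal_type_specific_scores_exists_general
    (u : C → ℕ) (pref : A → C → ℕ) (s : A → C → ℤ) (t1 : Finset A)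
    (L1 L2 : ℕ)
    (hL1 : L1 ≤ t1.card) (hL2 : L2 ≤ t1ᶜ.card) (hLU : L1 + L2 = ∑ c : C, u c) :
    ∃ (e : ℤ) (M : Finset (A × C)),
      IsMatching Finset.univ u M ∧
      WeaklyStable Finset.univ u pref
        (fun a c => s a c + if a ∈ t1 then e else 0) M ∧
      (M.filter (fun p => p.1 ∈ t1)).card = L1 ∧
      (M.filter (fun p => p.1 ∉ t1)).card = L2 := by
  obtain ⟨e, κ, g, hκ, hg, hcount⟩ :=
    exists_refines_isStable_card_filter_eq (u := u) (pref := pref) s t1 hL1 (by omega) (by omega)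
  have hU : ∑ c, u c ≤ Fintype.card A := by rw [← hLU, ← card_add_card_compl t1]; omega
  have hsplit := hg.card_filter_add_card_filter_not (t := t1) hU
  refine ⟨e, graph g, isMatching_graph hg.load_le, hg.weaklyStable_graph hκ, ?_, ?_⟩
  · rw [card_graph_filter_fst (· ∈ t1), hcount]
  · rw [card_graph_filter_fst (· ∉ t1)]
    omega

/-- Conjecture 3 of the paper (proved for two types): if every applicant-company pair is
mutually acceptable, the applicants are partitioned into type-1 applicants `t1` and
type-2 applicants `t1ᶜ`, and `L1 ≤ |t1|`, `L2 ≤ |t1ᶜ|`, `L1 + L2 = ∑ u c` are exact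
overall type quotas, then there is an integer bonus `e` added to the score of every
type-1 applicant at every company and a matching that is weakly stable for the adjusted
scores and matches exactly `L1` type-1 and exactly `L2` type-2 applicants. -/
theorem stable_matching_with_equal_type_specific_scores_exists
    (u : C → ℕ) (pref : A → C → ℕ) (s : A → C → ℤ) (t1 : Finset A)
    (hprefStrict : ∀ (a : A) (c c' : C), pref a c = pref a c' → c = c')
    (L1 L2 : ℕ)
    (hL1 : L1 ≤ t1.card) (hL2 : L2 ≤ t1ᶜ.card) (hLU : L1 + L2 = ∑ c : C, u c) :
    ∃ (e : ℤ) (M : Finset (A × C)),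
      IsMatching Finset.univ u M ∧
      WeaklyStable Finset.univ u pref
        (fun a c => s a c + if a ∈ t1 then e else 0) M ∧
      (M.filter (fun p => p.1 ∈ t1)).card = L1 ∧
      (M.filter (fun p => p.1 ∉ t1)).card = L2 :=
  stable_matching_with_equal_type_specific_scores_exists_general u pref s t1 L1 L2 hL1 hL2 hLU
end

section
/- Let I be a Hospitals/Residents instance with Ties. A matching μ is weakly stable for I if and only if there exists a Hospitals/Residents instance I' with strict company rankings, obtained from I by breaking the ties in the companies' rankings (i.e., each company's strict ranking in I' refines its weak ranking in I, and all preferences, quotas and acceptable pairs are otherwise identical), such that μ is stable for I'. -/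
open Finset

variable {A C : Type*} [Fintype A] [DecidableEq A] [Fintype C] [DecidableEq C]

/-- Characterisation of weakly stable matchings (Theorem 4/i of the paper): a matching
`μ` of an HRT instance (with scores `s`, possibly with ties) is weakly stable iff there
is a system of strict rankings `s'` obtained from `s` by tie-breaking (i.e. `s'` refines
the weak order of `s` at every company and is injective on the applicants acceptable to
each company, all other data unchanged) such that `μ` is stable for `s'`. -/
theorem weakly_stable_iff_stable_for_some_tie_breaking
    (E : Finset (A × C)) (u : C → ℕ) (pref : A → C → ℕ) (s : A → C → ℤ)
    (hprefStrict : ∀ a c c', (a, c) ∈ E → (a, c') ∈ E → pref a c = pref a c' → c = c')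
    (μ : Finset (A × C)) (hμ : IsMatching E u μ) :
    WeaklyStable E u pref s μ ↔
      ∃ s' : A → C → ℤ,
        (∀ (c : C) (a h : A), (a, c) ∈ E → (h, c) ∈ E → s h c < s a c → s' h c < s' a c) ∧
        (∀ (c : C) (a h : A), (a, c) ∈ E → (h, c) ∈ E → s' a c = s' h c → a = h) ∧
        WeaklyStable E u pref s' μ := by
  constructor
  · intro hws
    set n : ℤ := (Fintype.card A : ℤ) with hn
    set ι : A → ℤ := fun a => ((Fintype.equivFin A a : ℕ) : ℤ) with hι
    have hι_lt : ∀ a : A, ι a < n := by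
      intro a
      simp only [hι, hn]
      exact_mod_cast (Fintype.equivFin A a).is_lt
    have hι_nonneg : ∀ a : A, 0 ≤ ι a := by
      intro a; simp [hι]
    have hninj : ∀ a h : A, ι a = ι h → a = h := by
      intro a h hab
      have : ((Fintype.equivFin A a : ℕ) : ℤ) = ((Fintype.equivFin A h : ℕ) : ℤ) := hab
      have h2 : (Fintype.equivFin A a : ℕ) = (Fintype.equivFin A h : ℕ) := by exact_mod_cast this
      exact (Fintype.equivFin A).injective (Fin.ext h2)
    refine ⟨fun a c => 2 * n * s a c + (if (a, c) ∈ μ then n else 0) + ι a, ?_, ?_, ?_⟩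
    · intro c a h haE hhE hlt
      dsimp only
      have hn1 : (1 : ℤ) ≤ n := by
        simp only [hn]
        exact_mod_cast Fintype.card_pos_iff.mpr ⟨a⟩
      have hmul : 2 * n * (s h c + 1) ≤ 2 * n * s a c :=
        mul_le_mul_of_nonneg_left (by linarith) (by linarith)
      have hba : (0 : ℤ) ≤ (if (a, c) ∈ μ then n else 0) := by split <;> linarith
      have hbh : (if (h, c) ∈ μ then n else 0) ≤ n := by split <;> linarith
      have := hι_lt h
      have := hι_nonneg a
      linarith
    · intro c a h haE hhE heq
      dsimp only at heq
      have hn1 : (1 : ℤ) ≤ n := by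
        simp only [hn]
        exact_mod_cast Fintype.card_pos_iff.mpr ⟨a⟩
      have hba0 : (0 : ℤ) ≤ (if (a, c) ∈ μ then n else 0) := by split <;> linarith
      have hban : (if (a, c) ∈ μ then n else 0) ≤ n := by split <;> linarith
      have hbh0 : (0 : ℤ) ≤ (if (h, c) ∈ μ then n else 0) := by split <;> linarith
      have hbhn : (if (h, c) ∈ μ then n else 0) ≤ n := by split <;> linarith
      have hia := hι_lt a; have hia0 := hι_nonneg a
      have hih := hι_lt h; have hih0 := hι_nonneg h
      have hs : s a c = s h c := by
        rcases lt_trichotomy (s a c) (s h c) with hc | hc | hc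
        · have hmul : 2 * n * (s a c + 1) ≤ 2 * n * s h c :=
            mul_le_mul_of_nonneg_left (by linarith) (by linarith)
          linarith
        · exact hc
        · have hmul : 2 * n * (s h c + 1) ≤ 2 * n * s a c :=
            mul_le_mul_of_nonneg_left (by linarith) (by linarith)
          linarith
      rw [hs] at heq
      by_cases hma : (a, c) ∈ μ <;> by_cases hmh : (h, c) ∈ μ <;>
        simp only [hma, hmh, if_pos, if_neg, if_true, if_false] at heq <;>
        first
          | (exact hninj a h (by linarith))
          | linarith
    · intro a c hblk
      obtain ⟨hE, hnM, hpref, hcap⟩ := hblk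
      apply hws a c
      refine ⟨hE, hnM, hpref, ?_⟩
      rcases hcap with hcap | ⟨h, hhM, hlt⟩
      · exact Or.inl hcap
      · refine Or.inr ⟨h, hhM, ?_⟩
        by_contra hle
        push_neg at hle
        have hn1 : (1 : ℤ) ≤ n := by
          simp only [hn]
          exact_mod_cast Fintype.card_pos_iff.mpr ⟨a⟩
        have hmul : 2 * n * s a c ≤ 2 * n * s h c :=
          mul_le_mul_of_nonneg_left hle (by linarith)
        simp only [if_neg hnM, if_pos hhM] at hlt
        have := hι_lt a; have := hι_nonneg h
        linarith
  · rintro ⟨s', hmono, hinj, hst⟩ a c hblk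
    obtain ⟨hE, hnM, hpref, hcap⟩ := hblk
    apply hst a c
    refine ⟨hE, hnM, hpref, ?_⟩
    rcases hcap with hcap | ⟨h, hhM, hlt⟩
    · exact Or.inl hcap
    · exact Or.inr ⟨h, hhM, hmono c a h hE (hμ.1 hhM) hlt⟩
end

section
/- (Rural Hospitals Theorem) Let I be a Hospitals/Residents instance with strict preferences on both sides. Then: (a) the set of matched applicants is the same in every stable matching of I; (b) each company is assigned the same number of applicants in every stable matching of I; and (c) any company that does not fill its upper quota in some stable matching is assigned exactly the same set of applicants in every stable matching of I. -/
set_option linter.unusedSectionVars false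


open Finset

variable {A C : Type*} [Fintype A] [DecidableEq A] [Fintype C] [DecidableEq C]

/-- `(a, c) ∈ E \ M` blocks `M`: `a` is unmatched or prefers `c` to her assigned
company (`pref a` gives ranks, smaller = more preferred), and `c` has a free place or
an assignee with strictly smaller score than `a`. -/
def Blocks (E : Finset (A × C)) (u : C → ℕ) (pref : A → C → ℕ) (s : A → C → ℤ)
    (M : Finset (A × C)) (a : A) (c : C) : Prop :=
  (a, c) ∈ E ∧ (a, c) ∉ M ∧ (∀ c', (a, c') ∈ M → pref a c < pref a c') ∧
    ((M.filter (fun p => p.2 = c)).card < u c ∨ ∃ h : A, (h, c) ∈ M ∧ s h c < s a c)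

/-- `M` is stable: no pair blocks it. -/
def Stable (E : Finset (A × C)) (u : C → ℕ) (pref : A → C → ℕ) (s : A → C → ℤ)
    (M : Finset (A × C)) : Prop :=
  ∀ (a : A) (c : C), ¬ Blocks E u pref s M a c

namespace RHaux

lemma uniq_snd {M : Finset (A × C)} (h : ∀ a : A, (M.filter (fun p => p.1 = a)).card ≤ 1)
    {a : A} {c c' : C} (h1 : (a, c) ∈ M) (h2 : (a, c') ∈ M) : c = c' := by
  have := Finset.card_le_one.mp (h a) (a, c) (by simp [h1]) (a, c') (by simp [h2])
  simpa using congrArg Prod.snd this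

lemma mem_img {M : Finset (A × C)} {a : A} {c : C} :
    a ∈ (M.filter (fun p => p.2 = c)).image Prod.fst ↔ (a, c) ∈ M := by
  simp only [mem_image, mem_filter]
  constructor
  · rintro ⟨⟨x, y⟩, ⟨hm, rfl⟩, rfl⟩; exact hm
  · exact fun h => ⟨(a, c), ⟨h, rfl⟩, rfl⟩

lemma card_img (M : Finset (A × C)) (c : C) :
    ((M.filter (fun p => p.2 = c)).image Prod.fst).card = (M.filter (fun p => p.2 = c)).card := by
  apply Finset.card_image_of_injOn
  rintro ⟨x, y⟩ hx ⟨x', y'⟩ hy h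
  simp only [coe_filter, Set.mem_setOf_eq] at hx hy
  simp only at h
  exact Prod.ext h (hx.2.trans hy.2.symm)

/-- An injection between finsets exists whenever cards permit. -/
lemma exists_injOn (s t : Finset A) (h : s.card ≤ t.card) :
    ∃ f : A → A, Set.InjOn f s ∧ ∀ x ∈ s, f x ∈ t := by
  classical
  obtain ⟨t', ht's, ht'c⟩ := Finset.exists_subset_card_eq h
  have e := Finset.equivOfCardEq ht'c.symm
  refine ⟨fun x => if hx : x ∈ s then (e ⟨x, hx⟩ : A) else x, ?_, ?_⟩
  · intro x hx y hy hxy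
    simp only [Finset.mem_coe] at hx hy
    simp only [dif_pos hx, dif_pos hy] at hxy
    have := e.injective (Subtype.ext hxy)
    simpa using congrArg Subtype.val this
  · intro x hx
    simp only [dif_pos hx]
    exact ht's (e ⟨x, hx⟩).2

def Pprop (u : C → ℕ) (s : A → C → ℤ) (M M' : Finset (A × C)) (a : A) : Prop :=
  ∃ c, (a, c) ∈ M ∧ (a, c) ∉ M' ∧ (M'.filter (fun p => p.2 = c)).card = u c ∧
    ∀ h, (h, c) ∈ M' → s a c < s h c

/-- From non-blocking with a satisfied capacity/score condition, the applicant must be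
matched in `M` to a strictly preferred company. -/
lemma L1 {E : Finset (A × C)} {u : C → ℕ} {pref : A → C → ℕ} {s : A → C → ℤ}
    (hprefStrict : ∀ a c c', (a, c) ∈ E → (a, c') ∈ E → pref a c = pref a c' → c = c')
    {M : Finset (A × C)}
    (hM : IsMatching E u M) (hMstable : Stable E u pref s M)
    {a : A} {c : C} (hE : (a, c) ∈ E) (h2 : (a, c) ∉ M)
    (h3 : (M.filter (fun p => p.2 = c)).card < u c ∨ ∃ h, (h, c) ∈ M ∧ s h c < s a c) :
    ∃ c', (a, c') ∈ M ∧ pref a c' < pref a c := by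
  by_contra hcon
  push_neg at hcon
  refine hMstable a c ⟨hE, h2, fun c' hc' => lt_of_le_of_ne (hcon c' hc') ?_, h3⟩
  intro heq
  exact h2 (hprefStrict a c c' hE (hM.1 hc') heq ▸ hc')

/-- From non-blocking with a satisfied preference condition, the company must be full
and all its assignees strictly better. -/
lemma L2 {E : Finset (A × C)} {u : C → ℕ} {pref : A → C → ℕ} {s : A → C → ℤ}
    (hcompStrict : ∀ c a h, (a, c) ∈ E → (h, c) ∈ E → s a c = s h c → a = h)
    {M' : Finset (A × C)}
    (hM' : IsMatching E u M') (hM'stable : Stable E u pref s M')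
    {a : A} {c' : C} (hE : (a, c') ∈ E) (h2 : (a, c') ∉ M')
    (h3 : ∀ cx, (a, cx) ∈ M' → pref a c' < pref a cx) :
    (M'.filter (fun p => p.2 = c')).card = u c' ∧ ∀ h, (h, c') ∈ M' → s a c' < s h c' := by
  have hnb := hM'stable a c'
  unfold Blocks at hnb
  push_neg at hnb
  obtain ⟨hle, hsc⟩ := hnb hE h2 h3
  refine ⟨le_antisymm (hM'.2.2 c') hle, fun h hh => lt_of_le_of_ne (hsc h hh) ?_⟩
  intro heq
  obtain rfl := hcompStrict c' a h hE (hM'.1 hh) heq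
  exact h2 hh

/-- Step lemma: the `Pprop` invariant propagates. -/
lemma Lstep {E : Finset (A × C)} {u : C → ℕ} {pref : A → C → ℕ} {s : A → C → ℤ}
    (hprefStrict : ∀ a c c', (a, c) ∈ E → (a, c') ∈ E → pref a c = pref a c' → c = c')
    (hcompStrict : ∀ c a h, (a, c) ∈ E → (h, c) ∈ E → s a c = s h c → a = h)
    {M M' : Finset (A × C)}
    (hM : IsMatching E u M) (hMstable : Stable E u pref s M)
    (hM' : IsMatching E u M') (hM'stable : Stable E u pref s M')
    {a a' : A} {c : C}
    (hac : (a, c) ∈ M)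
    (hsc : ∀ h, (h, c) ∈ M' → s a c < s h c)
    (h1 : (a', c) ∈ M') (h2 : (a', c) ∉ M) :
    Pprop u s M M' a' := by
  have hlt : s a c < s a' c := hsc a' h1
  obtain ⟨c', hc'M, hpref⟩ :=
    L1 hprefStrict hM hMstable (hM'.1 h1) h2 (Or.inr ⟨a, hac, hlt⟩)
  have hne : c' ≠ c := fun h => h2 (h ▸ hc'M)
  have hnotM' : (a', c') ∉ M' := fun h => hne (uniq_snd hM'.2.1 h h1)
  have hpc : ∀ cx, (a', cx) ∈ M' → pref a' c' < pref a' cx := by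
    intro cx hcx
    have : cx = c := uniq_snd hM'.2.1 hcx h1
    rwa [this]
  obtain ⟨hf, hs⟩ := L2 hcompStrict hM' hM'stable (hM.1 hc'M) hnotM' hpc
  exact ⟨c', hc'M, hnotM', hf, hs⟩



/-- Core counting lemma: an applicant satisfying `Pprop` which is avoidable in the
injection bookkeeping leads to a contradiction. -/
lemma CORE {E : Finset (A × C)} {u : C → ℕ} {pref : A → C → ℕ} {s : A → C → ℤ}
    (hprefStrict : ∀ a c c', (a, c) ∈ E → (a, c') ∈ E → pref a c = pref a c' → c = c')
    (hcompStrict : ∀ c a h, (a, c) ∈ E → (h, c) ∈ E → s a c = s h c → a = h)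
    {M M' : Finset (A × C)}
    (hM : IsMatching E u M) (hMstable : Stable E u pref s M)
    (hM' : IsMatching E u M') (hM'stable : Stable E u pref s M')
    (a₀ : A) (hP : Pprop u s M M' a₀)
    (Hcard : ∀ c, (M'.filter (fun p => p.2 = c)).card = u c →
      (((M.filter (fun p => p.2 = c)).image Prod.fst) \
        ((M'.filter (fun p => p.2 = c)).image Prod.fst)).card ≤
      ((((M'.filter (fun p => p.2 = c)).image Prod.fst) \
        ((M.filter (fun p => p.2 = c)).image Prod.fst)).erase a₀).card) :
    False := by
  classical
  set imgM : C → Finset A := fun c => (M.filter (fun p => p.2 = c)).image Prod.fst with himgM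
  set imgM' : C → Finset A := fun c => (M'.filter (fun p => p.2 = c)).image Prod.fst with himgM'
  -- choose per-company injections
  have hΨ : ∀ c : C, ∃ f : A → A,
      (M'.filter (fun p => p.2 = c)).card = u c →
        Set.InjOn f ↑(imgM c \ imgM' c) ∧
          ∀ x ∈ imgM c \ imgM' c, f x ∈ (imgM' c \ imgM c).erase a₀ := by
    intro c
    by_cases hc : (M'.filter (fun p => p.2 = c)).card = u c
    · obtain ⟨f, hfi, hft⟩ := exists_injOn (imgM c \ imgM' c) ((imgM' c \ imgM c).erase a₀)
        (Hcard c hc)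
      exact ⟨f, fun _ => ⟨hfi, hft⟩⟩
    · exact ⟨id, fun h => absurd h hc⟩
  choose Ψ hΨspec using hΨ
  set P : A → Prop := Pprop u s M M' with hPdef
  set T : Finset A := Finset.univ.filter P with hT
  set g : A → A := fun a => if h : P a then Ψ h.choose a else a with hg
  -- basic facts for a with P a
  have key : ∀ (a : A) (h : P a),
      g a ∈ (imgM' h.choose \ imgM h.choose).erase a₀ ∧ P (g a) := by
    intro a h
    obtain ⟨haM, haM', hfull, hsc⟩ := h.choose_spec
    set c := h.choose
    have hdom : a ∈ imgM c \ imgM' c := by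
      rw [Finset.mem_sdiff]
      exact ⟨mem_img.mpr haM, fun hx => haM' (mem_img.mp hx)⟩
    obtain ⟨hinj, hmaps⟩ := hΨspec c hfull
    have hga : g a = Ψ c a := dif_pos h
    have hmem : g a ∈ (imgM' c \ imgM c).erase a₀ := by rw [hga]; exact hmaps a hdom
    have hmem' : g a ∈ imgM' c \ imgM c := Finset.mem_of_mem_erase hmem
    rw [Finset.mem_sdiff] at hmem'
    refine ⟨hmem, ?_⟩
    exact Lstep hprefStrict hcompStrict hM hMstable hM' hM'stable haM hsc
      (mem_img.mp hmem'.1) (fun hx => hmem'.2 (mem_img.mpr hx))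
  have hmapsT : ∀ a ∈ T, g a ∈ T := by
    intro a ha
    have h : P a := (Finset.mem_filter.mp ha).2
    exact Finset.mem_filter.mpr ⟨Finset.mem_univ _, (key a h).2⟩
  have hinjT : Set.InjOn g ↑T := by
    intro a ha b hb hab
    have hpa : P a := (Finset.mem_filter.mp (Finset.mem_coe.mp ha)).2
    have hpb : P b := (Finset.mem_filter.mp (Finset.mem_coe.mp hb)).2
    have hga := (key a hpa).1
    have hgb := (key b hpb).1
    have hga' := Finset.mem_sdiff.mp (Finset.mem_of_mem_erase hga)
    have hgb' := Finset.mem_sdiff.mp (Finset.mem_of_mem_erase hgb)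
    have hcc : hpa.choose = hpb.choose := by
      apply uniq_snd hM'.2.1 (mem_img.mp hga'.1)
      rw [hab]
      exact mem_img.mp hgb'.1
    -- now use injectivity of Ψ at that company
    obtain ⟨haM, haM', hfulla, hsca⟩ := hpa.choose_spec
    obtain ⟨hbM, hbM', hfullb, hscb⟩ := hpb.choose_spec
    obtain ⟨hinj, _⟩ := hΨspec hpa.choose hfulla
    have hda : a ∈ imgM hpa.choose \ imgM' hpa.choose := by
      rw [Finset.mem_sdiff]
      exact ⟨mem_img.mpr haM, fun hx => haM' (mem_img.mp hx)⟩
    have hdb : b ∈ imgM hpa.choose \ imgM' hpa.choose := by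
      rw [Finset.mem_sdiff, hcc]
      exact ⟨mem_img.mpr hbM, fun hx => hbM' (mem_img.mp hx)⟩
    apply hinj (Finset.mem_coe.mpr hda) (Finset.mem_coe.mpr hdb)
    have h1 : g a = Ψ hpa.choose a := dif_pos hpa
    have h2 : g b = Ψ hpb.choose b := dif_pos hpb
    calc Ψ hpa.choose a = g a := h1.symm
      _ = g b := hab
      _ = Ψ hpb.choose b := h2
      _ = Ψ hpa.choose b := by rw [hcc]
  have ha₀T : a₀ ∈ T := Finset.mem_filter.mpr ⟨Finset.mem_univ _, hP⟩
  have himage : T.image g = T := by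
    apply Finset.eq_of_subset_of_card_le
    · intro x hx
      obtain ⟨b, hb, rfl⟩ := Finset.mem_image.mp hx
      exact hmapsT b hb
    · rw [Finset.card_image_of_injOn hinjT]
  have : a₀ ∈ T.image g := by rw [himage]; exact ha₀T
  obtain ⟨b, hb, hgb⟩ := Finset.mem_image.mp this
  have hpb : P b := (Finset.mem_filter.mp hb).2
  have := (key b hpb).1
  rw [hgb] at this
  exact Finset.notMem_erase a₀ _ this

lemma sdiff_card_le {s t : Finset A} (h : s.card ≤ t.card) :
    (s \ t).card ≤ (t \ s).card := by
  have e1 := Finset.card_sdiff_add_card_inter s t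
  have e2 := Finset.card_sdiff_add_card_inter t s
  rw [Finset.inter_comm] at e2
  omega

/-- Part (a): every applicant matched in `M` is matched in `M'`. -/
lemma matched_subset {E : Finset (A × C)} {u : C → ℕ} {pref : A → C → ℕ} {s : A → C → ℤ}
    (hprefStrict : ∀ a c c', (a, c) ∈ E → (a, c') ∈ E → pref a c = pref a c' → c = c')
    (hcompStrict : ∀ c a h, (a, c) ∈ E → (h, c) ∈ E → s a c = s h c → a = h)
    {M M' : Finset (A × C)}
    (hM : IsMatching E u M) (hMstable : Stable E u pref s M)
    (hM' : IsMatching E u M') (hM'stable : Stable E u pref s M') :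
    M.image Prod.fst ⊆ M'.image Prod.fst := by
  intro a ha
  by_contra hna
  obtain ⟨⟨a', c₀⟩, hpM, rfl⟩ := Finset.mem_image.mp ha
  set a := (a', c₀).1
  have hnc : ∀ c, (a, c) ∉ M' := fun c hc => hna (Finset.mem_image.mpr ⟨(a, c), hc, rfl⟩)
  have h3 : ∀ cx, (a, cx) ∈ M' → pref a c₀ < pref a cx := fun cx hcx => absurd hcx (hnc cx)
  obtain ⟨hfull, hsc⟩ := L2 hcompStrict hM' hM'stable (hM.1 hpM) (hnc c₀) h3
  apply CORE hprefStrict hcompStrict hM hMstable hM' hM'stable a ⟨c₀, hpM, hnc c₀, hfull, hsc⟩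
  intro c hfc
  have hnmem : a ∉ ((M'.filter (fun p => p.2 = c)).image Prod.fst \
      (M.filter (fun p => p.2 = c)).image Prod.fst) := by
    intro hx
    exact hnc c (mem_img.mp (Finset.mem_sdiff.mp hx).1)
  rw [Finset.erase_eq_of_notMem hnmem]
  apply sdiff_card_le
  rw [card_img, card_img, hfc]
  exact hM.2.2 c

/-- Part (b), one direction. -/
lemma fiber_le {E : Finset (A × C)} {u : C → ℕ} {pref : A → C → ℕ} {s : A → C → ℤ}
    (hprefStrict : ∀ a c c', (a, c) ∈ E → (a, c') ∈ E → pref a c = pref a c' → c = c')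
    (hcompStrict : ∀ c a h, (a, c) ∈ E → (h, c) ∈ E → s a c = s h c → a = h)
    {M M' : Finset (A × C)}
    (hM : IsMatching E u M) (hMstable : Stable E u pref s M)
    (hM' : IsMatching E u M') (hM'stable : Stable E u pref s M')
    (c₀ : C) :
    (M'.filter (fun p => p.2 = c₀)).card ≤ (M.filter (fun p => p.2 = c₀)).card := by
  by_contra hcon
  push_neg at hcon
  have himg : ((M.filter (fun p => p.2 = c₀)).image Prod.fst).card <
      ((M'.filter (fun p => p.2 = c₀)).image Prod.fst).card := by
    rw [card_img, card_img]; exact hcon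
  have hne : (((M'.filter (fun p => p.2 = c₀)).image Prod.fst) \
      ((M.filter (fun p => p.2 = c₀)).image Prod.fst)).Nonempty := by
    rw [Finset.nonempty_iff_ne_empty]
    intro hemp
    rw [Finset.sdiff_eq_empty_iff_subset] at hemp
    exact absurd (Finset.card_le_card hemp) (by omega)
  obtain ⟨a₀, ha₀⟩ := hne
  rw [Finset.mem_sdiff] at ha₀
  have haM' : (a₀, c₀) ∈ M' := mem_img.mp ha₀.1
  have haM : (a₀, c₀) ∉ M := fun h => ha₀.2 (mem_img.mpr h)
  obtain ⟨c₁, hc₁M, hpref⟩ := L1 hprefStrict hM hMstable (hM'.1 haM') haM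
    (Or.inl (lt_of_lt_of_le hcon (hM'.2.2 c₀)))
  have hne₁ : c₁ ≠ c₀ := fun h => haM (h ▸ hc₁M)
  have hnotM' : (a₀, c₁) ∉ M' := fun h => hne₁ (uniq_snd hM'.2.1 h haM')
  have h3 : ∀ cx, (a₀, cx) ∈ M' → pref a₀ c₁ < pref a₀ cx := by
    intro cx hcx
    have : cx = c₀ := uniq_snd hM'.2.1 hcx haM'
    rwa [this]
  obtain ⟨hfull, hsc⟩ := L2 hcompStrict hM' hM'stable (hM.1 hc₁M) hnotM' h3
  apply CORE hprefStrict hcompStrict hM hMstable hM' hM'stable a₀ ⟨c₁, hc₁M, hnotM', hfull, hsc⟩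
  intro c hfc
  by_cases hcc : c = c₀
  · subst hcc
    rw [Finset.card_erase_of_mem (Finset.mem_sdiff.mpr ha₀)]
    have e1 := Finset.card_sdiff_add_card_inter
      ((M.filter (fun p => p.2 = c)).image Prod.fst)
      ((M'.filter (fun p => p.2 = c)).image Prod.fst)
    have e2 := Finset.card_sdiff_add_card_inter
      ((M'.filter (fun p => p.2 = c)).image Prod.fst)
      ((M.filter (fun p => p.2 = c)).image Prod.fst)
    rw [Finset.inter_comm] at e2
    omega
  · have hnmem : a₀ ∉ (((M'.filter (fun p => p.2 = c)).image Prod.fst) \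
        ((M.filter (fun p => p.2 = c)).image Prod.fst)) := by
      intro hx
      exact hcc (uniq_snd hM'.2.1 (mem_img.mp (Finset.mem_sdiff.mp hx).1) haM')
    rw [Finset.erase_eq_of_notMem hnmem]
    apply sdiff_card_le
    rw [card_img, card_img, hfc]
    exact hM.2.2 c

/-- Part (c): membership transfer for undersubscribed companies. -/
lemma part_c_mem {E : Finset (A × C)} {u : C → ℕ} {pref : A → C → ℕ} {s : A → C → ℤ}
    (hprefStrict : ∀ a c c', (a, c) ∈ E → (a, c') ∈ E → pref a c = pref a c' → c = c')
    (hcompStrict : ∀ c a h, (a, c) ∈ E → (h, c) ∈ E → s a c = s h c → a = h)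
    {M M' : Finset (A × C)}
    (hM : IsMatching E u M) (hMstable : Stable E u pref s M)
    (hM' : IsMatching E u M') (hM'stable : Stable E u pref s M')
    (hcnt : ∀ c, (M.filter (fun p => p.2 = c)).card = (M'.filter (fun p => p.2 = c)).card)
    {c₀ : C} {a : A} (hlt : (M.filter (fun p => p.2 = c₀)).card < u c₀)
    (haM : (a, c₀) ∈ M) : (a, c₀) ∈ M' := by
  by_contra hnot
  have hlt' : (M'.filter (fun p => p.2 = c₀)).card < u c₀ := by rw [← hcnt c₀]; exact hlt
  obtain ⟨c', hc'M', hpref⟩ := L1 hprefStrict hM' hM'stable (hM.1 haM) hnot (Or.inl hlt')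
  have hne : c' ≠ c₀ := fun h => hnot (h ▸ hc'M')
  have hnotM : (a, c') ∉ M := fun h => hne (uniq_snd hM.2.1 h haM)
  have h3 : ∀ cx, (a, cx) ∈ M → pref a c' < pref a cx := by
    intro cx hcx
    have : cx = c₀ := uniq_snd hM.2.1 hcx haM
    rwa [this]
  obtain ⟨hfull, hsc⟩ := L2 hcompStrict hM hMstable (hM'.1 hc'M') hnotM h3
  apply CORE hprefStrict hcompStrict hM' hM'stable hM hMstable a ⟨c', hc'M', hnotM, hfull, hsc⟩
  intro c hfc
  have hcne : c ≠ c₀ := fun h => absurd (h ▸ hfc) (Nat.ne_of_lt hlt)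
  have hnmem : a ∉ (((M.filter (fun p => p.2 = c)).image Prod.fst) \
      ((M'.filter (fun p => p.2 = c)).image Prod.fst)) := by
    intro hx
    exact hcne (uniq_snd hM.2.1 (mem_img.mp (Finset.mem_sdiff.mp hx).1) haM)
  rw [Finset.erase_eq_of_notMem hnmem]
  apply sdiff_card_le
  rw [card_img, card_img, ← hcnt c]

end RHaux

/-- Rural Hospitals Theorem: for an HR instance with strict preferences on both sides
(applicant ranks `pref` injective over acceptable companies, company scores `s`
injective over acceptable applicants) and any two stable matchings `M`, `M'`:
(a) the set of matched applicants is the same, (b) every company is assigned the same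
number of applicants, and (c) any company not filling its upper quota in some stable
matching is assigned exactly the same set of applicants in every stable matching. -/
theorem rural_hospitals
    (E : Finset (A × C)) (u : C → ℕ) (pref : A → C → ℕ) (s : A → C → ℤ)
    (hprefStrict : ∀ a c c', (a, c) ∈ E → (a, c') ∈ E → pref a c = pref a c' → c = c')
    (hcompStrict : ∀ c a h, (a, c) ∈ E → (h, c) ∈ E → s a c = s h c → a = h)
    (M M' : Finset (A × C))
    (hM : IsMatching E u M) (hMstable : Stable E u pref s M)
    (hM' : IsMatching E u M') (hM'stable : Stable E u pref s M') :
    M.image Prod.fst = M'.image Prod.fst ∧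
    (∀ c : C, (M.filter (fun p => p.2 = c)).card = (M'.filter (fun p => p.2 = c)).card) ∧
    (∀ c : C, (M.filter (fun p => p.2 = c)).card < u c →
      (M.filter (fun p => p.2 = c)).image Prod.fst
        = (M'.filter (fun p => p.2 = c)).image Prod.fst) := by
  have hb : ∀ c : C, (M.filter (fun p => p.2 = c)).card = (M'.filter (fun p => p.2 = c)).card :=
    fun c => le_antisymm
      (RHaux.fiber_le hprefStrict hcompStrict hM' hM'stable hM hMstable c)
      (RHaux.fiber_le hprefStrict hcompStrict hM hMstable hM' hM'stable c)
  refine ⟨?_, hb, ?_⟩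
  · exact Finset.Subset.antisymm
      (RHaux.matched_subset hprefStrict hcompStrict hM hMstable hM' hM'stable)
      (RHaux.matched_subset hprefStrict hcompStrict hM' hM'stable hM hMstable)
  · intro c hlt
    apply Finset.eq_of_subset_of_card_le
    · intro a ha
      exact RHaux.mem_img.mpr (RHaux.part_c_mem hprefStrict hcompStrict hM hMstable
        hM' hM'stable hb hlt (RHaux.mem_img.mp ha))
    · rw [RHaux.card_img, RHaux.card_img, hb c]
end

section
/- (Vacancy chains, new applicant) Let I be a Hospitals/Residents instance with strict preferences and let I' be obtained from I by adding one new applicant a together with her strict preference list and her position in each company's strict ranking (all other data unchanged). Let S be the set of matched applicants in a stable matching of I and S' the set of matched applicants in a stable matching of I'. Then exactly one of the following holds: S' = S, or S' = S ∪ {a}, or S' = (S ∪ {a}) \ {b} for some applicant b ∈ S with b ≠ a. -/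
/-!
Say that `x` is better off in `M` than in `N` if her partner in `M` beats her partner in `N`
(being unmatched is worst). Let `x` be such an applicant, at `c` in `M`, with `(x, c)`
acceptable in the instance of `N`. Stability of `N` makes `c` full in `N` with applicants
ranked above `x`, and each of them who is not at `c` in `M` would block `M` unless she, too,
is better off in `M` than in `N`, or is unacceptable to the instance of `M`. As `c` has at
most as many seats in `M` as in `N`, counting seats company by company shows that there are
at most as many such `x` as such newcomers. With `(M, N) = (M', M)` this gives
`S' \ {a} ⊆ S`; with `(M, N) = (M, M')`, where only `a` can be unacceptable, it gives
`|S \ S'| ≤ |S' \ S|`. Since `a ∉ S`, the three outcomes then follow by counting.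
-/

open Finset

variable {A C : Type*} [Fintype A] [DecidableEq A] [Fintype C] [DecidableEq C]

section

variable {α γ : Type*}

theorem mem_image_fst [DecidableEq α] {M : Finset (α × γ)} {x : α} :
    x ∈ M.image Prod.fst ↔ ∃ c, (x, c) ∈ M := by
  simp

theorem injOn_fst_of_card_filter_le_one [DecidableEq α] {N : Finset (α × γ)}
    (hN : ∀ x, #(N.filter (fun p => p.1 = x)) ≤ 1) : Set.InjOn Prod.fst (N : Set (α × γ)) :=
  fun p hp q hq h =>
    card_le_one.mp (hN p.1) p (mem_filter.mpr ⟨hp, rfl⟩) q (mem_filter.mpr ⟨hq, h.symm⟩)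

theorem card_filter_sdiff_le_of_card_fiber_le [DecidableEq α] [DecidableEq γ]
    {M N : Finset (α × γ)} {T : Finset γ}
    (h : ∀ c ∈ T, #(M.filter (fun p => p.2 = c)) ≤ #(N.filter (fun p => p.2 = c))) :
    #((M \ N).filter (fun p => p.2 ∈ T)) ≤ #((N \ M).filter (fun p => p.2 ∈ T)) := by
  have filter_sdiff (X Y : Finset (α × γ)) : (X \ Y).filter (fun p => p.2 ∈ T) =
      X.filter (fun p => p.2 ∈ T) \ Y.filter (fun p => p.2 ∈ T) := by
    ext; simp only [mem_filter, mem_sdiff]; tauto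
  rw [filter_sdiff, filter_sdiff, card_sdiff_le_card_sdiff_iff,
    ← sum_card_fiberwise_eq_card_filter, ← sum_card_fiberwise_eq_card_filter]
  exact sum_le_sum h

theorem card_le_card_of_saturated [DecidableEq α] [DecidableEq γ]
    {M N : Finset (α × γ)} {u : γ → ℕ} {D W : Finset α}
    (hMu : ∀ c, #(M.filter (fun p => p.2 = c)) ≤ u c)
    (hN : ∀ x, #(N.filter (fun p => p.1 = x)) ≤ 1)
    (hD : ∀ x ∈ D, ∃ c, (x, c) ∈ M ∧ (x, c) ∉ N ∧ u c ≤ #(N.filter (fun p => p.2 = c)) ∧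
      ∀ y, (y, c) ∈ N → (y, c) ∉ M → y ∈ W) :
    #D ≤ #W := by
  classical
  set T := (M.image Prod.snd).filter fun c =>
    u c ≤ #(N.filter (fun p => p.2 = c)) ∧ ∀ y, (y, c) ∈ N → (y, c) ∉ M → y ∈ W
  have hD_sub : D ⊆ ((M \ N).filter (fun p => p.2 ∈ T)).image Prod.fst := by
    intro x hx
    obtain ⟨c, hxM, hxN, hc⟩ := hD x hx
    exact mem_image.mpr ⟨(x, c), mem_filter.mpr ⟨mem_sdiff.mpr ⟨hxM, hxN⟩,
      mem_filter.mpr ⟨mem_image_of_mem _ hxM, hc⟩⟩, rfl⟩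
  have hW_sup : ((N \ M).filter (fun p => p.2 ∈ T)).image Prod.fst ⊆ W := by
    simp only [subset_iff, mem_image, mem_filter, mem_sdiff, T]
    rintro y ⟨⟨y, c⟩, ⟨⟨hyN, hyM⟩, -, -, hc⟩, rfl⟩
    exact hc y hyN hyM
  calc #D ≤ #(((M \ N).filter (fun p => p.2 ∈ T)).image Prod.fst) := card_le_card hD_sub
    _ ≤ #((M \ N).filter (fun p => p.2 ∈ T)) := card_image_le
    _ ≤ #((N \ M).filter (fun p => p.2 ∈ T)) := card_filter_sdiff_le_of_card_fiber_le
        fun c hc => (hMu c).trans (mem_filter.mp hc).2.1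
    _ = #(((N \ M).filter (fun p => p.2 ∈ T)).image Prod.fst) :=
        (card_image_of_injOn ((injOn_fst_of_card_filter_le_one hN).mono
          fun p hp => (mem_sdiff.mp (mem_filter.mp hp).1).1)).symm
    _ ≤ #W := card_le_card hW_sup

theorem Stable.saturated_of_prefers [DecidableEq γ] {E : Finset (α × γ)} {u : γ → ℕ}
    {pref : α → γ → ℕ} {s : α → γ → ℤ} {N : Finset (α × γ)} (hN : Stable E u pref s N)
    {x : α} {c : γ} (hxE : (x, c) ∈ E) (hxN : (x, c) ∉ N)
    (hpref : ∀ c', (x, c') ∈ N → pref x c < pref x c') :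
    u c ≤ #(N.filter (fun p => p.2 = c)) ∧ ∀ y, (y, c) ∈ N → s x c ≤ s y c := by
  have h := hN x c
  simp only [Blocks, not_and, not_or, not_exists, not_lt] at h
  exact h hxE hxN hpref

theorem Stable.exists_pref_le_of_rank_lt [DecidableEq γ] {E : Finset (α × γ)} {u : γ → ℕ}
    {pref : α → γ → ℕ} {s : α → γ → ℤ} {M : Finset (α × γ)} (hM : Stable E u pref s M)
    {x y : α} {c : γ} (hxM : (x, c) ∈ M) (hyE : (y, c) ∈ E) (hyM : (y, c) ∉ M)
    (hxy : s x c < s y c) : ∃ c', (y, c') ∈ M ∧ pref y c' ≤ pref y c := by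
  by_contra! h
  exact hM y c ⟨hyE, hyM, h, Or.inr ⟨x, hxM, hxy⟩⟩

def Prefers (pref : α → γ → ℕ) (M N : Finset (α × γ)) (x : α) : Prop :=
  ∃ c, (x, c) ∈ M ∧ ∀ c', (x, c') ∈ N → pref x c < pref x c'

theorem Prefers.mem_image_fst [DecidableEq α] {pref : α → γ → ℕ} {M N : Finset (α × γ)}
    {x : α} (h : Prefers pref M N x) : x ∈ M.image Prod.fst :=
  have ⟨_, hc, _⟩ := h
  mem_image_of_mem Prod.fst hc

theorem prefers_of_notMem_image_fst [DecidableEq α] {pref : α → γ → ℕ} {M N : Finset (α × γ)}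
    {x : α} {c : γ} (hxM : (x, c) ∈ M) (hxN : x ∉ N.image Prod.fst) : Prefers pref M N x :=
  ⟨c, hxM, fun c' hc' => (hxN (mem_image_fst.mpr ⟨c', hc'⟩)).elim⟩

theorem card_le_card_of_stable [DecidableEq α] [DecidableEq γ]
    {E E₁ E₂ : Finset (α × γ)} {u : γ → ℕ} {pref : α → γ → ℕ} {s : α → γ → ℤ}
    (hE₁ : E₁ ⊆ E) (hE₂ : E₂ ⊆ E)
    (hprefStrict : ∀ x c c', (x, c) ∈ E → (x, c') ∈ E → pref x c = pref x c' → c = c')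
    (hcompStrict : ∀ c x y, (x, c) ∈ E → (y, c) ∈ E → s x c = s y c → x = y)
    {M N : Finset (α × γ)} (hM : IsMatching E₁ u M) (hMstable : Stable E₁ u pref s M)
    (hN : IsMatching E₂ u N) (hNstable : Stable E₂ u pref s N) {D W : Finset α}
    (hD : ∀ x ∈ D, ∃ c, (x, c) ∈ M ∧ (x, c) ∈ E₂ ∧ ∀ c', (x, c') ∈ N → pref x c < pref x c')
    (hW : ∀ y c, (y, c) ∈ N → (y, c) ∉ E₁ ∨ Prefers pref M N y → y ∈ W) :
    #D ≤ #W := by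
  refine card_le_card_of_saturated hM.2.2 hN.2.1 fun x hx => ?_
  obtain ⟨c, hxM, hxE, hpref⟩ := hD x hx
  have hxN : (x, c) ∉ N := fun h => (hpref c h).false
  obtain ⟨hfull, hrank⟩ := hNstable.saturated_of_prefers hxE hxN hpref
  refine ⟨c, hxM, hxN, hfull, fun y hyN hyM => hW y c hyN (or_iff_not_imp_left.mpr fun hyE => ?_)⟩
  rw [not_not] at hyE
  have hxy : s x c < s y c := (hrank y hyN).lt_of_ne fun h =>
    hyM (hcompStrict c x y (hE₂ hxE) (hE₂ (hN.1 hyN)) h ▸ hxM)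
  obtain ⟨c', hyM', hle⟩ := hMstable.exists_pref_le_of_rank_lt hxM hyE hyM hxy
  refine ⟨c', hyM', fun c'' hc'' => ?_⟩
  obtain rfl : c'' = c := congrArg Prod.snd (injOn_fst_of_card_filter_le_one hN.2.1 hc'' hyN rfl)
  exact hle.lt_of_ne fun h => hyM (hprefStrict y c' c'' (hE₁ (hM.1 hyM')) (hE₁ hyE) h ▸ hyM')

theorem notMem_image_fst_of_subset_filter [DecidableEq α] {E M : Finset (α × γ)} {a : α}
    (hM : M ⊆ E.filter (fun p => p.1 ≠ a)) : a ∉ M.image Prod.fst := fun ha =>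
  have ⟨_, hc⟩ := mem_image_fst.mp ha
  (mem_filter.mp (hM hc)).2 rfl

section NewApplicant

variable [DecidableEq α] [DecidableEq γ] {E : Finset (α × γ)} {u : γ → ℕ} {pref : α → γ → ℕ}
  {s : α → γ → ℤ} {a : α} {M M' : Finset (α × γ)}

theorem image_fst_subset_insert_of_stable
    (hprefStrict : ∀ x c c', (x, c) ∈ E → (x, c') ∈ E → pref x c = pref x c' → c = c')
    (hcompStrict : ∀ c x y, (x, c) ∈ E → (y, c) ∈ E → s x c = s y c → x = y)
    (hM : IsMatching (E.filter (fun p => p.1 ≠ a)) u M)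
    (hMstable : Stable (E.filter (fun p => p.1 ≠ a)) u pref s M)
    (hM' : IsMatching E u M') (hM'stable : Stable E u pref s M') :
    M'.image Prod.fst ⊆ insert a (M.image Prod.fst) := by
  classical
  set S := M.image Prod.fst
  set D := (M'.image Prod.fst).filter fun x => x ≠ a ∧ Prefers pref M' M x
  have hcard : #D ≤ #(D ∩ S) := by
    refine card_le_card_of_stable Subset.rfl (filter_subset _ E) hprefStrict hcompStrict
      hM' hM'stable hM hMstable (fun x hx => ?_) fun y c hyM h => ?_
    · obtain ⟨-, hxa, c, hxc, hpref⟩ := mem_filter.mp hx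
      exact ⟨c, hxc, mem_filter.mpr ⟨hM'.1 hxc, hxa⟩, hpref⟩
    · obtain ⟨hyE, hya⟩ := mem_filter.mp (hM.1 hyM)
      have hpref := h.resolve_left (not_not.mpr hyE)
      exact mem_inter.mpr ⟨mem_filter.mpr ⟨hpref.mem_image_fst, hya, hpref⟩,
        mem_image_fst.mpr ⟨c, hyM⟩⟩
  have hDS : D ⊆ S := inter_eq_left.mp (eq_of_subset_of_card_le inter_subset_left hcard)
  intro x hx
  rw [mem_insert, or_iff_not_imp_left]
  intro hxa
  by_contra hxS
  obtain ⟨c, hxc⟩ := mem_image_fst.mp hx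
  exact hxS (hDS (mem_filter.mpr ⟨hx, hxa, prefers_of_notMem_image_fst hxc hxS⟩))

theorem card_image_fst_le_of_stable
    (hprefStrict : ∀ x c c', (x, c) ∈ E → (x, c') ∈ E → pref x c = pref x c' → c = c')
    (hcompStrict : ∀ c x y, (x, c) ∈ E → (y, c) ∈ E → s x c = s y c → x = y)
    (hM : IsMatching (E.filter (fun p => p.1 ≠ a)) u M)
    (hMstable : Stable (E.filter (fun p => p.1 ≠ a)) u pref s M)
    (hM' : IsMatching E u M') (hM'stable : Stable E u pref s M') :
    #(M.image Prod.fst) ≤ #(M'.image Prod.fst) := by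
  classical
  set S := M.image Prod.fst
  set S' := M'.image Prod.fst
  set D := S.filter (Prefers pref M M')
  have hcard : #D ≤ #(D ∩ S' ∪ S' \ S) := by
    refine card_le_card_of_stable (filter_subset _ E) Subset.rfl hprefStrict hcompStrict
      hM hMstable hM' hM'stable (fun x hx => ?_) fun y c hyM' h => ?_
    · obtain ⟨c, hxc, hpref⟩ := (mem_filter.mp hx).2
      exact ⟨c, hxc, (mem_filter.mp (hM.1 hxc)).1, hpref⟩
    · have hyS' : y ∈ S' := mem_image_fst.mpr ⟨c, hyM'⟩
      rcases h with hyE | hpref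
      · obtain rfl : y = a := by
          by_contra hya
          exact hyE (mem_filter.mpr ⟨hM'.1 hyM', hya⟩)
        exact mem_union_right _ (mem_sdiff.mpr ⟨hyS', notMem_image_fst_of_subset_filter hM.1⟩)
      · exact mem_union_left _
          (mem_inter.mpr ⟨mem_filter.mpr ⟨hpref.mem_image_fst, hpref⟩, hyS'⟩)
  have hSD : S \ S' ⊆ D \ S' := fun x hx => by
    obtain ⟨hxS, hxS'⟩ := mem_sdiff.mp hx
    obtain ⟨c, hxc⟩ := mem_image_fst.mp hxS
    exact mem_sdiff.mpr ⟨mem_filter.mpr ⟨hxS, prefers_of_notMem_image_fst hxc hxS'⟩, hxS'⟩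
  have hD_split := card_sdiff_add_card_inter D S'
  have hunion := card_union_le (D ∩ S') (S' \ S)
  have hsdiff := card_le_card hSD
  rw [← card_sdiff_le_card_sdiff_iff]
  omega

end NewApplicant

theorem eq_or_eq_insert_or_eq_insert_erase [DecidableEq α] {S S' : Finset α} {a : α}
    (haS : a ∉ S) (hsub : S' ⊆ insert a S) (hcard : #S ≤ #S') :
    S' = S ∨ S' = insert a S ∨ ∃ b ∈ S, b ≠ a ∧ S' = insert a (S.erase b) := by
  by_cases ha : a ∈ S'
  · have hT : S'.erase a ⊆ S := subset_insert_iff.mp hsub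
    have hST : #(S \ S'.erase a) ≤ 1 := by
      rw [card_sdiff_of_subset hT, card_erase_of_mem ha]
      omega
    rw [← insert_erase ha]
    rcases Nat.le_one_iff_eq_zero_or_eq_one.mp hST with h | h
    · exact Or.inr (Or.inl (congrArg _ (hT.antisymm
        (sdiff_eq_empty_iff_subset.mp (card_eq_zero.mp h)))))
    · obtain ⟨b, hb⟩ := card_eq_one.mp h
      have hbS : b ∈ S := (mem_sdiff.mp (hb ▸ mem_singleton_self b)).1
      refine Or.inr (Or.inr ⟨b, hbS, ne_of_mem_of_not_mem hbS haS, ?_⟩)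
      rw [← sdiff_singleton_eq_erase b S, ← hb, Finset.sdiff_sdiff_eq_self hT]
  · exact Or.inl (eq_of_subset_of_card_le ((subset_insert_iff_of_notMem ha).mp hsub) hcard)

theorem exactly_one_of_subset_insert_of_card_le [DecidableEq α] {S S' : Finset α} {a : α}
    (haS : a ∉ S) (hsub : S' ⊆ insert a S) (hcard : #S ≤ #S') :
    (S' = S ∧ ¬ (S' = insert a S) ∧
        ¬ ∃ b ∈ S, b ≠ a ∧ S' = insert a (S.erase b)) ∨
    (¬ (S' = S) ∧ S' = insert a S ∧
        ¬ ∃ b ∈ S, b ≠ a ∧ S' = insert a (S.erase b)) ∨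
    (¬ (S' = S) ∧ ¬ (S' = insert a S) ∧
        ∃ b ∈ S, b ≠ a ∧ S' = insert a (S.erase b)) := by
  have hins : insert a S ≠ S := insert_ne_self.mpr haS
  have herase (b : α) : insert a (S.erase b) ≠ S := fun h => haS (h ▸ mem_insert_self a _)
  have hne {b : α} (hb : b ∈ S) (hba : b ≠ a) : insert a (S.erase b) ≠ insert a S := fun h => by
    have hb' : b ∈ insert a (S.erase b) := h ▸ mem_insert_of_mem hb
    simp [hba] at hb'
  rcases eq_or_eq_insert_or_eq_insert_erase haS hsub hcard with rfl | rfl | ⟨b, hb, hba, rfl⟩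
  · exact Or.inl ⟨rfl, hins.symm, fun ⟨b, _, _, h⟩ => herase b h.symm⟩
  · exact Or.inr (Or.inl ⟨hins, rfl, fun ⟨b, hb, hba, h⟩ => hne hb hba h.symm⟩)
  · exact Or.inr (Or.inr ⟨herase b, hne hb hba, b, hb, hba, rfl⟩)

end

/-- Vacancy chains, new applicant (Theorem 4/iii, first part): let `I'` be an HR
instance with strict preferences, acceptable pairs `E'`, and let `I` be obtained by
deleting the applicant `a` (its acceptable pairs are those of `E'` not involving `a`;
all other data unchanged).  If `S` is the set of matched applicants in a stable matching
`M` of `I` and `S'` the set of matched applicants in a stable matching `M'` of `I'`,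
then exactly one of the following holds: `S' = S`, or `S' = S ∪ {a}`, or
`S' = (S ∪ {a}) \ {b}` for some applicant `b ∈ S`, `b ≠ a`. -/
theorem vacancy_chain_new_applicant
    (E' : Finset (A × C)) (u : C → ℕ) (pref : A → C → ℕ) (s : A → C → ℤ) (a : A)
    (hprefStrict : ∀ x c c', (x, c) ∈ E' → (x, c') ∈ E' → pref x c = pref x c' → c = c')
    (hcompStrict : ∀ c x y, (x, c) ∈ E' → (y, c) ∈ E' → s x c = s y c → x = y)
    (M M' : Finset (A × C))
    (hM : IsMatching (E'.filter (fun p => p.1 ≠ a)) u M)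
    (hMstable : Stable (E'.filter (fun p => p.1 ≠ a)) u pref s M)
    (hM' : IsMatching E' u M') (hM'stable : Stable E' u pref s M')
    (S S' : Finset A)
    (hS : S = M.image Prod.fst) (hS' : S' = M'.image Prod.fst) :
    (S' = S ∧ ¬ (S' = insert a S) ∧
        ¬ ∃ b ∈ S, b ≠ a ∧ S' = insert a (S.erase b)) ∨
    (¬ (S' = S) ∧ S' = insert a S ∧
        ¬ ∃ b ∈ S, b ≠ a ∧ S' = insert a (S.erase b)) ∨
    (¬ (S' = S) ∧ ¬ (S' = insert a S) ∧
        ∃ b ∈ S, b ≠ a ∧ S' = insert a (S.erase b)) := by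
  subst hS hS'
  exact exactly_one_of_subset_insert_of_card_le (notMem_image_fst_of_subset_filter hM.1)
    (image_fst_subset_insert_of_stable hprefStrict hcompStrict hM hMstable hM' hM'stable)
    (card_image_fst_le_of_stable hprefStrict hcompStrict hM hMstable hM' hM'stable)
end

section
/- There exists a Hospitals/Residents instance with two types of applicants such that adding a uniform positive bonus to the scores of all type-1 applicants at every company strictly decreases the number of type-1 applicants matched in the stable matching. Concretely: with type-1 applicants a_1, a_2, a_3, type-2 applicants a_4, a_5, companies c_1, c_2, c_3 each with upper quota 1, every applicant preferring c_1 to c_2 and c_2 to c_3, and scores s_{1,1}=5, s_{1,2}=7, s_{1,3}=1, s_{2,1}=1, s_{2,2}=1, s_{2,3}=3, s_{3,1}=1, s_{3,2}=1, s_{3,3}=1, s_{4,1}=6, s_{4,2}=1, s_{4,3}=6, s_{5,1}=2, s_{5,2}=6, s_{5,3}=2, the matching {(a_1,c_2), (a_2,c_3), (a_4,c_1)} (with two type-1 applicants matched) is weakly stable for the original scores, while after adding a sufficiently large bonus e to all type-1 scores the unique weakly stable matching is {(a_1,c_1), (a_4,c_3), (a_5,c_2)} (with one type-1 applicant matched).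 -/
open Finset

variable {A C : Type*} [DecidableEq A] [DecidableEq C]

/-- Scores of the concrete instance: applicants `a₁,…,a₅` are `0,…,4 : Fin 5`
(`a₁, a₂, a₃` of type 1, `a₄, a₅` of type 2), companies `c₁, c₂, c₃` are
`0, 1, 2 : Fin 3`. -/
def score : Fin 5 → Fin 3 → ℤ := fun a c =>
  !![5, 7, 1; 1, 1, 3; 1, 1, 1; 6, 1, 6; 2, 6, 2] a c

/-- Scores after adding bonus `e` to every type-1 applicant. -/
def bonusScore (e : ℤ) : Fin 5 → Fin 3 → ℤ := fun a c =>
  score a c + if (a : ℕ) < 3 then e else 0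

/-- Every applicant prefers `c₁` to `c₂` and `c₂` to `c₃`. -/
def prefs : Fin 5 → Fin 3 → ℕ := fun _ c => (c : ℕ)

private lemma score1 : ∀ h : Fin 5, h ≠ 0 → bonusScore 2 h 0 < bonusScore 2 0 0 := by decide

private lemma score2 : ∀ h : Fin 5, h ≠ 0 → h ≠ 4 → bonusScore 2 h 1 < bonusScore 2 4 1 := by
  decide

private lemma score3 : ∀ h : Fin 5, h ≠ 0 → h ≠ 4 → h ≠ 3 →
    bonusScore 2 h 2 < bonusScore 2 3 2 := by decide

private lemma quota_cond (N : Finset (Fin 5 × Fin 3)) (c : Fin 3) (b : Fin 5)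
    (hb : (b, c) ∉ N)
    (hsc : ∀ h : Fin 5, (h, c) ∈ N → bonusScore 2 h c < bonusScore 2 b c) :
    ((N.filter (fun p => p.2 = c)).card < 1 ∨
      ∃ h : Fin 5, (h, c) ∈ N ∧ bonusScore 2 h c < bonusScore 2 b c) := by
  rcases (N.filter (fun p => p.2 = c)).eq_empty_or_nonempty with he | ⟨p, hp⟩
  · left; simp [he]
  · right
    rw [Finset.mem_filter] at hp
    have hpc : p = (p.1, c) := by rw [← hp.2]
    exact ⟨p.1, hpc ▸ hp.1, hsc p.1 (hpc ▸ hp.1)⟩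

/-- Uniqueness of the weakly stable matching for bonus `e = 2`. -/
private lemma unique_stable (N : Finset (Fin 5 × Fin 3))
    (hm : IsMatching Finset.univ (fun _ => 1) N)
    (hst : WeaklyStable Finset.univ (fun _ => 1) prefs (bonusScore 2) N) :
    N = ({((0 : Fin 5), (0 : Fin 3)), (3, 2), (4, 1)} : Finset (Fin 5 × Fin 3)) := by
  obtain ⟨-, hA, hC⟩ := hm
  have capA : ∀ a : Fin 5, ∀ c c' : Fin 3, (a, c) ∈ N → (a, c') ∈ N → c = c' := by
    intro a c c' h h'
    have h1 : ((a : Fin 5), c) ∈ N.filter (fun p => p.1 = a) := Finset.mem_filter.mpr ⟨h, rfl⟩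
    have h2 : ((a : Fin 5), c') ∈ N.filter (fun p => p.1 = a) := Finset.mem_filter.mpr ⟨h', rfl⟩
    have := Finset.card_le_one.mp (hA a) _ h1 _ h2
    exact (Prod.mk.injEq _ _ _ _ ▸ this).2
  have capC : ∀ c : Fin 3, ∀ a a' : Fin 5, (a, c) ∈ N → (a', c) ∈ N → a = a' := by
    intro c a a' h h'
    have h1 : ((a : Fin 5), c) ∈ N.filter (fun p => p.2 = c) := Finset.mem_filter.mpr ⟨h, rfl⟩
    have h2 : ((a' : Fin 5), c) ∈ N.filter (fun p => p.2 = c) := Finset.mem_filter.mpr ⟨h', rfl⟩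
    have := Finset.card_le_one.mp (hC c) _ h1 _ h2
    exact (Prod.mk.injEq _ _ _ _ ▸ this).1
  -- Step 1: (0, 0) ∈ N
  have h00 : ((0 : Fin 5), (0 : Fin 3)) ∈ N := by
    by_contra hn
    refine hst 0 0 ⟨Finset.mem_univ _, hn, ?_, ?_⟩
    · intro c' hc'
      fin_cases c' <;> first | exact absurd hc' hn | decide
    · refine quota_cond N 0 0 hn (fun h hh => score1 h ?_)
      intro h0; subst h0; exact hn hh
  -- Step 2: (4, 1) ∈ N
  have h41 : ((4 : Fin 5), (1 : Fin 3)) ∈ N := by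
    by_contra hn
    refine hst 4 1 ⟨Finset.mem_univ _, hn, ?_, ?_⟩
    · intro c' hc'
      fin_cases c'
      · exact absurd (capC 0 0 4 h00 hc') (by decide)
      · exact absurd hc' hn
      · decide
    · refine quota_cond N 1 4 hn (fun h hh => score2 h ?_ ?_)
      · intro h0; subst h0
        exact absurd (capA 0 0 1 h00 hh) (by decide)
      · intro h4; subst h4; exact hn hh
  -- Step 3: (3, 2) ∈ N
  have h32 : ((3 : Fin 5), (2 : Fin 3)) ∈ N := by
    by_contra hn
    refine hst 3 2 ⟨Finset.mem_univ _, hn, ?_, ?_⟩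
    · intro c' hc'
      fin_cases c'
      · exact absurd (capC 0 0 3 h00 hc') (by decide)
      · exact absurd (capC 1 4 3 h41 hc') (by decide)
      · exact absurd hc' hn
    · refine quota_cond N 2 3 hn (fun h hh => score3 h ?_ ?_ ?_)
      · intro h0; subst h0
        exact absurd (capA 0 0 2 h00 hh) (by decide)
      · intro h4; subst h4
        exact absurd (capA 4 1 2 h41 hh) (by decide)
      · intro h3; subst h3; exact hn hh
  -- Conclusion
  apply Finset.Subset.antisymm
  · intro p hp
    obtain ⟨a, c⟩ := p
    fin_cases c
    · have := capC 0 a 0 hp h00; subst this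
      simp
    · have := capC 1 a 4 hp h41; subst this
      simp
    · have := capC 2 a 3 hp h32; subst this
      simp
  · intro p hp
    simp only [Finset.mem_insert, Finset.mem_singleton] at hp
    rcases hp with rfl | rfl | rfl
    · exact h00
    · exact h32
    · exact h41

/-- Adding a uniform positive bonus to the scores of all type-1 applicants can strictly
decrease the number of type-1 applicants matched in the (weakly) stable matching:
in the concrete instance, `{(a₁,c₂), (a₂,c₃), (a₄,c₁)}` (two type-1 applicants matched)
is weakly stable for the original scores, while for a suitable positive bonus `e` the
unique weakly stable matching is `{(a₁,c₁), (a₄,c₃), (a₅,c₂)}` (one type-1 applicant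
matched). -/
theorem bonus_can_decrease_type1_matched :
    IsMatching Finset.univ (fun _ => 1)
      ({((0 : Fin 5), (1 : Fin 3)), (1, 2), (3, 0)} : Finset (Fin 5 × Fin 3)) ∧
    WeaklyStable Finset.univ (fun _ => 1) prefs score
      ({((0 : Fin 5), (1 : Fin 3)), (1, 2), (3, 0)} : Finset (Fin 5 × Fin 3)) ∧
    (({((0 : Fin 5), (1 : Fin 3)), (1, 2), (3, 0)} : Finset (Fin 5 × Fin 3)).filter
      (fun p => (p.1 : ℕ) < 3)).card = 2 ∧
    ∃ e : ℤ, 0 < e ∧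
      IsMatching Finset.univ (fun _ => 1)
        ({((0 : Fin 5), (0 : Fin 3)), (3, 2), (4, 1)} : Finset (Fin 5 × Fin 3)) ∧
      WeaklyStable Finset.univ (fun _ => 1) prefs (bonusScore e)
        ({((0 : Fin 5), (0 : Fin 3)), (3, 2), (4, 1)} : Finset (Fin 5 × Fin 3)) ∧
      (∀ N : Finset (Fin 5 × Fin 3), IsMatching Finset.univ (fun _ => 1) N →
        WeaklyStable Finset.univ (fun _ => 1) prefs (bonusScore e) N →
        N = ({((0 : Fin 5), (0 : Fin 3)), (3, 2), (4, 1)} : Finset (Fin 5 × Fin 3))) ∧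
      (({((0 : Fin 5), (0 : Fin 3)), (3, 2), (4, 1)} : Finset (Fin 5 × Fin 3)).filter
        (fun p => (p.1 : ℕ) < 3)).card = 1 := by
  refine ⟨by unfold IsMatching; decide,
    by unfold WeaklyStable WeaklyBlocks; decide,
    by decide, 2, by decide,
    by unfold IsMatching; decide,
    by unfold WeaklyStable WeaklyBlocks; decide,
    unique_stable, by decide⟩
end
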